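/- arXiv:1010.6216 — 9 statements merged into one kernel-verified Lean document; each statement's English description precedes it below -/
import Mathlib

section
/- Given a real number r > 0, there exist positive real numbers s < t with s^t = t^s = r if and only if r > e^e. In that case, s and t are uniquely determined and satisfy 1 < s < e < t. -/
/-!
Put `a = log s`, `b = log t` and `d = b - a > 0`. The equation `s ^ t = t ^ s` reads
`a * exp b = b * exp a`, i.e. `a * exp d = a + d`, so `a = powPairLog d`, and then
`log (log r) = log a + b = powPairLogLog d`. The derivative of `powPairLogLog` has the sign of
`(exp d - 1) ^ 2 - d ^ 2 * exp d`, which is positive because `sinh x > x`. Since moreover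
`powPairLogLog d → 1` as `d → 0⁺` and `powPairLogLog d > log d`, the parameter `d` and hence the
pair are determined by `r`, and `r` ranges over `(exp (exp 1), ∞)`. The bounds
`0 < a < 1 < a + d` are `exp x > 1 + x` at `x = d` and `x = -d`.
-/

open Real Set Filter Topology

noncomputable def powPairLog (d : ℝ) : ℝ := d / (exp d - 1)

noncomputable def powPairLogLog (d : ℝ) : ℝ := log (powPairLog d) + powPairLog d + d

section PowPair

variable {d : ℝ}

lemma exp_sub_one_pos (hd : 0 < d) : 0 < exp d - 1 := sub_pos.2 (one_lt_exp_iff.2 hd)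

lemma exp_sub_one_ne_zero (hd : d ≠ 0) : exp d - 1 ≠ 0 := sub_ne_zero.2 (mt (exp_eq_one_iff d).1 hd)

lemma powPairLog_pos (hd : 0 < d) : 0 < powPairLog d := div_pos hd (exp_sub_one_pos hd)

lemma powPairLog_lt_one (hd : 0 < d) : powPairLog d < 1 :=
  (div_lt_one (exp_sub_one_pos hd)).2 (by linarith [add_one_lt_exp hd.ne'])

lemma powPairLog_mul_exp (hd : d ≠ 0) : powPairLog d * exp d = powPairLog d + d := by
  have := exp_sub_one_ne_zero hd
  rw [powPairLog]
  field_simp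
  ring

lemma eq_powPairLog_of_mul_exp_eq (hd : d ≠ 0) {a : ℝ} (h : a * exp d = a + d) :
    a = powPairLog d := by
  rw [powPairLog, eq_div_iff (exp_sub_one_ne_zero hd)]
  linarith

lemma one_lt_powPairLog_add (hd : 0 < d) : 1 < powPairLog d + d := by
  have h := add_one_lt_exp (neg_ne_zero.2 hd.ne')
  have : exp (-d) * exp d = 1 := by rw [← exp_add, neg_add_cancel, exp_zero]
  rw [← powPairLog_mul_exp hd.ne', powPairLog, div_mul_eq_mul_div, one_lt_div (exp_sub_one_pos hd)]
  nlinarith [exp_pos d]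

lemma sq_mul_exp_lt_sq_exp_sub_one (hd : 0 < d) : d ^ 2 * exp d < (exp d - 1) ^ 2 := by
  have hsinh := self_lt_sinh_iff.2 (half_pos hd)
  rw [sinh_eq] at hsinh
  have hhalf : exp (d / 2) * exp (d / 2) = exp d := by rw [← exp_add, add_halves]
  have hneg : exp (-(d / 2)) * exp (d / 2) = 1 := by rw [← exp_add, neg_add_cancel, exp_zero]
  have hlin : d * exp (d / 2) < exp d - 1 := by nlinarith [exp_pos (d / 2)]
  calc d ^ 2 * exp d = (d * exp (d / 2)) ^ 2 := by rw [← hhalf]; ring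
    _ < (exp d - 1) ^ 2 := pow_lt_pow_left₀ hlin (by positivity) two_ne_zero

lemma hasDerivAt_powPairLogLog (hd : 0 < d) :
    HasDerivAt powPairLogLog (((exp d - 1) ^ 2 - d ^ 2 * exp d) / (d * (exp d - 1) ^ 2)) d := by
  have hE := (exp_sub_one_pos hd).ne'
  have ha : HasDerivAt powPairLog ((1 * (exp d - 1) - d * exp d) / (exp d - 1) ^ 2) d :=
    (hasDerivAt_id d).div ((hasDerivAt_exp d).sub_const 1) hE
  refine (((ha.log (powPairLog_pos hd).ne').add ha).add (hasDerivAt_id d)).congr_deriv ?_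
  rw [powPairLog]
  field_simp
  ring

lemma strictMonoOn_powPairLogLog : StrictMonoOn powPairLogLog (Ioi 0) := by
  refine strictMonoOn_of_hasDerivWithinAt_pos (convex_Ioi 0)
    (fun x hx => (hasDerivAt_powPairLogLog hx).continuousAt.continuousWithinAt)
    (fun x hx => (hasDerivAt_powPairLogLog ?_).hasDerivWithinAt) fun x hx => ?_
  · rwa [interior_Ioi] at hx
  rw [interior_Ioi] at hx
  have := sq_mul_exp_lt_sq_exp_sub_one hx
  have := exp_sub_one_pos hx
  exact div_pos (by linarith) (mul_pos hx (by positivity))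

lemma tendsto_powPairLog_zero : Tendsto powPairLog (𝓝[>] 0) (𝓝 1) := by
  have h := ((hasDerivAt_exp 0).tendsto_slope_zero_right).inv₀ (exp_ne_zero 0)
  simp only [zero_add, exp_zero, smul_eq_mul, inv_one] at h
  refine h.congr fun x => ?_
  rw [powPairLog, mul_inv, inv_inv, div_eq_mul_inv]

lemma tendsto_powPairLogLog_zero : Tendsto powPairLogLog (𝓝[>] 0) (𝓝 1) := by
  have h : Tendsto (fun x => log (powPairLog x) + powPairLog x + x) (𝓝[>] 0)
      (𝓝 (log 1 + 1 + 0)) :=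
    ((tendsto_powPairLog_zero.log one_ne_zero).add tendsto_powPairLog_zero).add
      (tendsto_nhdsWithin_of_tendsto_nhds tendsto_id)
  rwa [log_one, zero_add, add_zero] at h

lemma one_lt_powPairLogLog (hd : 0 < d) : 1 < powPairLogLog d := by
  have hle : 1 ≤ powPairLogLog (d / 2) :=
    le_of_tendsto tendsto_powPairLogLog_zero <| eventually_of_mem (Ioo_mem_nhdsGT (half_pos hd))
      fun x hx => strictMonoOn_powPairLogLog.monotoneOn hx.1 (half_pos hd) hx.2.le
  exact hle.trans_lt (strictMonoOn_powPairLogLog (half_pos hd) hd (half_lt_self hd))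

lemma log_lt_powPairLogLog (hd : 0 < d) : log d < powPairLogLog d := by
  have hlog : log (exp d - 1) < d := by
    rw [log_lt_iff_lt_exp (exp_sub_one_pos hd)]
    linarith
  have := powPairLog_pos hd
  rw [powPairLogLog, powPairLog, log_div hd.ne' (exp_sub_one_pos hd).ne'] at *
  linarith

lemma exists_powPairLogLog_eq {y : ℝ} (hy : 1 < y) : ∃ d, 0 < d ∧ powPairLogLog d = y := by
  obtain ⟨δ, hδy, hδ⟩ :=
    ((tendsto_powPairLogLog_zero.eventually (gt_mem_nhds hy)).and self_mem_nhdsWithin).exists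
  have hyD : y < powPairLogLog (exp y) := by
    simpa only [log_exp] using log_lt_powPairLogLog (exp_pos y)
  have hδD : δ < exp y :=
    (strictMonoOn_powPairLogLog.lt_iff_lt hδ (exp_pos y)).1 (hδy.trans hyD)
  have hcont : ContinuousOn powPairLogLog (Icc δ (exp y)) := fun x hx =>
    (hasDerivAt_powPairLogLog (lt_of_lt_of_le hδ hx.1)).continuousAt.continuousWithinAt
  obtain ⟨d, hd, hdy⟩ := intermediate_value_Icc hδD.le hcont ⟨hδy.le, hyD.le⟩
  exact ⟨d, lt_of_lt_of_le hδ hd.1, hdy⟩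

lemma exp_powPairLog_rpow (hd : 0 < d) :
    exp (powPairLog d) ^ exp (powPairLog d + d) = exp (exp (powPairLogLog d)) := by
  rw [← exp_mul, powPairLogLog, exp_add, exp_add, exp_add, exp_log (powPairLog_pos hd)]
  ring_nf

lemma exp_powPairLog_add_rpow (hd : 0 < d) :
    exp (powPairLog d + d) ^ exp (powPairLog d) = exp (exp (powPairLogLog d)) := by
  rw [← exp_mul, ← powPairLog_mul_exp hd.ne', powPairLogLog, exp_add, exp_add,
    exp_log (powPairLog_pos hd)]
  ring_nf

end PowPair

lemma log_eq_powPairLog_of_rpow_eq {s t : ℝ} (hs : 0 < s) (hst : s < t) (h : s ^ t = t ^ s) :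
    log s = powPairLog (log t - log s) := by
  have ht := hs.trans hst
  refine eq_powPairLog_of_mul_exp_eq (sub_pos.2 (log_lt_log hs hst)).ne' ?_
  have hlog := congrArg log h
  rw [log_rpow hs, log_rpow ht] at hlog
  rw [exp_sub, exp_log hs, exp_log ht]
  field_simp
  linarith

lemma exists_powPair_of_rpow_eq {r s t : ℝ} (hs : 0 < s) (hst : s < t) (hsr : s ^ t = r)
    (htr : t ^ s = r) : ∃ d, 0 < d ∧ s = exp (powPairLog d) ∧ t = exp (powPairLog d + d) ∧
      r = exp (exp (powPairLogLog d)) := by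
  have hd : 0 < log t - log s := sub_pos.2 (log_lt_log hs hst)
  have ha := log_eq_powPairLog_of_rpow_eq hs hst (hsr.trans htr.symm)
  have hs' : s = exp (powPairLog (log t - log s)) := by rw [← ha, exp_log hs]
  have ht' : t = exp (powPairLog (log t - log s) + (log t - log s)) := by
    rw [← ha, add_sub_cancel, exp_log (hs.trans hst)]
  refine ⟨_, hd, hs', ht', ?_⟩
  rw [← hsr, ← exp_powPairLog_rpow hd, ← hs', ← ht']

theorem exists_s_t_pow_eq_iff_general (r : ℝ) :
    ((∃ s t : ℝ, 0 < s ∧ s < t ∧ s ^ t = r ∧ t ^ s = r) ↔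
        exp 1 ^ exp 1 < r) ∧
    (∀ s t s' t' : ℝ, 0 < s → s < t → s ^ t = r → t ^ s = r →
        0 < s' → s' < t' → s' ^ t' = r → t' ^ s' = r → s = s' ∧ t = t') ∧
    (∀ s t : ℝ, 0 < s → s < t → s ^ t = r → t ^ s = r →
        1 < s ∧ s < exp 1 ∧ exp 1 < t) := by
  rw [exp_one_rpow]
  refine ⟨⟨?_, fun hr => ?_⟩, ?_, ?_⟩
  · rintro ⟨s, t, hs, hst, hsr, htr⟩
    obtain ⟨d, hd, -, -, rfl⟩ := exists_powPair_of_rpow_eq hs hst hsr htr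
    exact exp_lt_exp.2 (exp_lt_exp.2 (one_lt_powPairLogLog hd))
  · have hlog : exp 1 < log r := (lt_log_iff_exp_lt ((exp_pos _).trans hr)).2 hr
    obtain ⟨d, hd, hdr⟩ :=
      exists_powPairLogLog_eq ((lt_log_iff_exp_lt ((exp_pos 1).trans hlog)).2 hlog)
    have hdr' : exp (exp (powPairLogLog d)) = r := by
      rw [hdr, exp_log ((exp_pos 1).trans hlog), exp_log ((exp_pos _).trans hr)]
    exact ⟨_, _, exp_pos _, exp_lt_exp.2 (lt_add_of_pos_right _ hd),
      (exp_powPairLog_rpow hd).trans hdr', (exp_powPairLog_add_rpow hd).trans hdr'⟩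
  · intro s t s' t' hs hst hsr htr hs' hst' hsr' htr'
    obtain ⟨d, hd, rfl, rfl, rfl⟩ := exists_powPair_of_rpow_eq hs hst hsr htr
    obtain ⟨d', hd', rfl, rfl, h⟩ := exists_powPair_of_rpow_eq hs' hst' hsr' htr'
    obtain rfl : d = d' := strictMonoOn_powPairLogLog.injOn hd hd' (by simpa using h)
    exact ⟨rfl, rfl⟩
  · intro s t hs hst hsr htr
    obtain ⟨d, hd, rfl, rfl, -⟩ := exists_powPair_of_rpow_eq hs hst hsr htr
    exact ⟨one_lt_exp_iff.2 (powPairLog_pos hd), exp_lt_exp.2 (powPairLog_lt_one hd),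
      exp_lt_exp.2 (one_lt_powPairLog_add hd)⟩

/-- For `r > 0` there exist `0 < s < t` with `s^t = t^s = r` iff `r > e^e`;
in that case `s, t` are unique and `1 < s < e < t`. -/
theorem exists_s_t_pow_eq_iff (r : ℝ) (hr : 0 < r) :
    ((∃ s t : ℝ, 0 < s ∧ s < t ∧ s ^ t = r ∧ t ^ s = r) ↔
        exp 1 ^ exp 1 < r) ∧
    (∀ s t s' t' : ℝ, 0 < s → s < t → s ^ t = r → t ^ s = r →
        0 < s' → s' < t' → s' ^ t' = r → t' ^ s' = r → s = s' ∧ t = t') ∧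
    (∀ s t : ℝ, 0 < s → s < t → s ^ t = r → t ^ s = r →
        1 < s ∧ s < exp 1 ∧ exp 1 < t) :=
  exists_s_t_pow_eq_iff_general r
end

section
/- Assume the Gelfond–Schneider theorem: if α and β are algebraic complex numbers with α ≠ 0, α ≠ 1, and β irrational, then α^β is transcendental. Let a be a rational number with a ≥ e^{-1/e} that is not of the form n^n for any natural number n, and let t > 0 be a real number with t^t = a. Then t is transcendental. -/
open Real

/-! If `t` is algebraic and irrational, Gelfond–Schneider applied to `α = β = t` makes `t ^ t`
transcendental, so it cannot be rational. If `t = q` is rational, raising `q ^ q = a` to the power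
`q.den` gives `q ^ q.num = a ^ q.den` with coprime exponents, so `q` is a `q.den`-th power `c ^ q.den`
in `ℚ`; then `q.den = c.den ^ q.den`, which forces `q.den = 1`, and `a = q ^ q` has the form
`n ^ n`. -/

theorem Rat.den_eq_one_of_pow_natAbs_num_eq_pow_den {q a : ℚ}
    (h : q ^ q.num.natAbs = a ^ q.den) : q.den = 1 := by
  obtain ⟨c, hqc, -⟩ := (pow_eq_pow_iff_of_coprime q.reduced).mp h
  have hden : q.den = c.den ^ q.den := (congrArg Rat.den hqc).trans (Rat.den_pow c _)
  have hc : c.den = 1 := by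
    by_contra hc
    have h2 : 2 ≤ c.den := by have := c.den_pos; omega
    have : q.den < c.den ^ q.den :=
      (Nat.lt_two_pow_self).trans_le (Nat.pow_le_pow_left h2 _)
    omega
  rwa [hc, one_pow] at hden

theorem Rat.pow_natAbs_num_eq_pow_den_of_rpow_self {q a : ℚ} (hq : 0 < q)
    (h : (q : ℝ) ^ (q : ℝ) = a) : q ^ q.num.natAbs = a ^ q.den := by
  have hnum : ((q.num.natAbs : ℕ) : ℝ) = (q : ℝ) * q.den := by
    rw [Nat.cast_natAbs, Int.cast_abs, abs_of_nonneg (mod_cast Rat.num_nonneg.mpr hq.le)]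
    exact_mod_cast (Rat.mul_den_eq_num q).symm
  have hq₀ : (0 : ℝ) ≤ q := by exact_mod_cast hq.le
  have : (q : ℝ) ^ q.num.natAbs = (a : ℝ) ^ q.den := by
    rw [← rpow_natCast, hnum, rpow_mul hq₀, h, rpow_natCast]
  exact_mod_cast this

theorem Rat.exists_eq_natCast_of_rpow_self_eq_ratCast {q a : ℚ} (hq : 0 < q)
    (h : (q : ℝ) ^ (q : ℝ) = a) : ∃ n : ℕ, (q : ℝ) = n := by
  have hden := Rat.den_eq_one_of_pow_natAbs_num_eq_pow_den
    (Rat.pow_natAbs_num_eq_pow_den_of_rpow_self hq h)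
  have hq_nat : ((q.num.natAbs : ℕ) : ℚ) = q := by
    rw [Nat.cast_natAbs, Int.cast_abs, abs_of_nonneg (mod_cast Rat.num_nonneg.mpr hq.le),
      Rat.coe_int_num_of_den_eq_one hden]
  exact ⟨q.num.natAbs, mod_cast hq_nat.symm⟩

theorem transcendental_rpow_self_of_irrational
    (hGS : ∀ α β : ℂ, IsAlgebraic ℚ α → IsAlgebraic ℚ β → α ≠ 0 → α ≠ 1 →
      (¬∃ q : ℚ, (q : ℂ) = β) → Transcendental ℚ (α ^ β))
    {t : ℝ} (ht : 0 < t) (halg : IsAlgebraic ℚ t) (hirr : Irrational t) :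
    Transcendental ℚ (t ^ t) := by
  have hC : Transcendental ℚ ((t : ℂ) ^ (t : ℂ)) :=
    hGS _ _ halg.algebraMap halg.algebraMap (mod_cast hirr.ne_zero) (mod_cast hirr.ne_one)
      fun ⟨q, hq⟩ ↦ hirr.ne_rat q (mod_cast hq.symm)
  rw [← Complex.ofReal_cpow ht.le] at hC
  exact (transcendental_algebraMap_iff (algebraMap ℝ ℂ).injective).mp hC

theorem transcendental_of_self_pow_rat_general
    (hGS : ∀ α β : ℂ, IsAlgebraic ℚ α → IsAlgebraic ℚ β → α ≠ 0 → α ≠ 1 →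
      (¬∃ q : ℚ, (q : ℂ) = β) → Transcendental ℚ (α ^ β))
    (a : ℚ)
    (hnn : ¬∃ n : ℕ, (a : ℝ) = (n : ℝ) ^ (n : ℕ))
    (t : ℝ) (ht : 0 < t) (htt : t ^ t = (a : ℝ)) :
    Transcendental ℚ t := by
  intro halg
  by_cases hirr : Irrational t
  · exact transcendental_rpow_self_of_irrational hGS ht halg hirr
      (htt ▸ isAlgebraic_ratCast ℚ a)
  · obtain ⟨q, rfl⟩ := not_not.mp hirr
    obtain ⟨n, hn⟩ := Rat.exists_eq_natCast_of_rpow_self_eq_ratCast (mod_cast ht) htt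
    exact hnn ⟨n, by rw [← htt, hn, rpow_natCast]⟩

/-- Assuming Gelfond–Schneider, if `a ∈ ℚ`, `a ≥ e^(-1/e)`, `a` is not of the
form `n^n`, and `t > 0` satisfies `t^t = a`, then `t` is transcendental. -/
theorem transcendental_of_self_pow_rat
    (hGS : ∀ α β : ℂ, IsAlgebraic ℚ α → IsAlgebraic ℚ β → α ≠ 0 → α ≠ 1 →
      (¬∃ q : ℚ, (q : ℂ) = β) → Transcendental ℚ (α ^ β))
    (a : ℚ) (ha : exp (-(exp 1)⁻¹) ≤ (a : ℝ))
    (hnn : ¬∃ n : ℕ, (a : ℝ) = (n : ℝ) ^ (n : ℕ))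
    (t : ℝ) (ht : 0 < t) (htt : t ^ t = (a : ℝ)) :
    Transcendental ℚ t :=
  transcendental_of_self_pow_rat_general hGS a hnn t ht htt
end

section
/- Assume the Gelfond–Schneider theorem. Let a ≥ e^{-1/e} be a real number such that a^n is algebraic but irrational for every positive integer n, and let t > 0 satisfy t^t = a. Then t is transcendental. -/
/-!
If `t = p / q` is rational then `a ^ q = t ^ p` is rational. Otherwise `t` is algebraic
irrational, `t ≠ 1` because `a` is irrational, and Gelfond–Schneider makes `t ^ t = a`
transcendental.
-/

open Real

def GelfondSchneider : Prop :=
  ∀ α β : ℂ, IsAlgebraic ℚ α → IsAlgebraic ℚ β → α ≠ 0 → α ≠ 1 →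
    (¬∃ q : ℚ, (q : ℂ) = β) → Transcendental ℚ (α ^ β)

lemma Complex.transcendental_ofReal_iff {x : ℝ} :
    Transcendental ℚ (x : ℂ) ↔ Transcendental ℚ x :=
  transcendental_algebraMap_iff (A := ℂ) (algebraMap ℝ ℂ).injective

lemma Complex.isAlgebraic_ofReal_iff {x : ℝ} : IsAlgebraic ℚ (x : ℂ) ↔ IsAlgebraic ℚ x :=
  isAlgebraic_algebraMap_iff (A := ℂ) (algebraMap ℝ ℂ).injective

lemma GelfondSchneider.transcendental_rpow (hGS : GelfondSchneider) {α β : ℝ}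
    (hα : IsAlgebraic ℚ α) (hβ : IsAlgebraic ℚ β) (hα0 : 0 < α) (hα1 : α ≠ 1)
    (hβirr : Irrational β) : Transcendental ℚ (α ^ β) := by
  have hβirrC : ¬∃ q : ℚ, (q : ℂ) = β := fun ⟨q, hq⟩ => hβirr ⟨q, by exact_mod_cast hq⟩
  have h := hGS α β (Complex.isAlgebraic_ofReal_iff.mpr hα)
    (Complex.isAlgebraic_ofReal_iff.mpr hβ)
    (by exact_mod_cast hα0.ne') (by exact_mod_cast hα1) hβirrC
  rwa [← Complex.ofReal_cpow hα0.le, Complex.transcendental_ofReal_iff] at h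

lemma rpow_self_ratCast_pow_den {q : ℚ} (hq : 0 ≤ q) :
    ((q : ℝ) ^ (q : ℝ)) ^ q.den = ((q ^ q.num.toNat : ℚ) : ℝ) := by
  have hmul : (q : ℝ) * q.den = q.num.toNat := by
    have hnum : ((q.num.toNat : ℕ) : ℝ) = q.num := by
      exact_mod_cast Int.toNat_of_nonneg (Rat.num_nonneg.mpr hq)
    rw [hnum]
    exact_mod_cast Rat.mul_den_eq_num q
  rw [← rpow_natCast, ← rpow_mul (by exact_mod_cast hq), hmul, rpow_natCast]
  push_cast
  rfl

theorem transcendental_of_self_pow_algebraic_irrational_general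
    (hGS : ∀ α β : ℂ, IsAlgebraic ℚ α → IsAlgebraic ℚ β → α ≠ 0 → α ≠ 1 →
      (¬∃ q : ℚ, (q : ℂ) = β) → Transcendental ℚ (α ^ β))
    (a : ℝ)
    (halg : ∀ n : ℕ, 1 ≤ n → IsAlgebraic ℚ (a ^ n) ∧ ¬∃ q : ℚ, (q : ℝ) = a ^ n)
    (t : ℝ) (ht : 0 < t) (htt : t ^ t = a) :
    Transcendental ℚ t := by
  intro htalg
  have ha_alg : IsAlgebraic ℚ a := pow_one a ▸ (halg 1 le_rfl).1
  have ha_irr : Irrational a := pow_one a ▸ (halg 1 le_rfl).2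
  by_cases ht_irr : Irrational t
  · have ht1 : t ≠ 1 := by
      rintro rfl
      exact ha_irr ⟨1, by simp [← htt]⟩
    exact GelfondSchneider.transcendental_rpow hGS htalg htalg ht ht1 ht_irr (htt ▸ ha_alg)
  · obtain ⟨q, rfl⟩ := not_not.mp ht_irr
    have hq : 0 ≤ q := by exact_mod_cast ht.le
    exact (halg q.den q.pos).2 ⟨_, by rw [← htt, rpow_self_ratCast_pow_den hq]⟩

/-- Assuming Gelfond–Schneider, if `a ≥ e^(-1/e)` and every positive integer
power `a^n` is algebraic irrational, and `t > 0` satisfies `t^t = a`, then `t`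
is transcendental. -/
theorem transcendental_of_self_pow_algebraic_irrational
    (hGS : ∀ α β : ℂ, IsAlgebraic ℚ α → IsAlgebraic ℚ β → α ≠ 0 → α ≠ 1 →
      (¬∃ q : ℚ, (q : ℂ) = β) → Transcendental ℚ (α ^ β))
    (a : ℝ) (ha : exp (-(exp 1)⁻¹) ≤ a)
    (halg : ∀ n : ℕ, 1 ≤ n → IsAlgebraic ℚ (a ^ n) ∧ ¬∃ q : ℚ, (q : ℝ) = a ^ n)
    (t : ℝ) (ht : 0 < t) (htt : t ^ t = a) :
    Transcendental ℚ t :=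
  transcendental_of_self_pow_algebraic_irrational_general hGS a halg t ht htt
end

section
/- Assume the Gelfond–Schneider theorem. Let r be a natural number with r > e^e and r ≠ 16, and let 0 < s < t be the real numbers with s^t = t^s = r. Then at least one of s, t is transcendental. -/
/-!
Gelfond–Schneider applied to `s ^ t = r` and `t ^ s = r` makes `t` and `s` rational. A nonnegative
rational with a positive rational power in `ℕ` lies in `ℕ` (compare denominators), so `s < t` are
natural numbers with `s ^ t = t ^ s`. Then `s ^ s ∣ t ^ s` gives `t = k s`, and `s ^ (k - 1) = k`
forces `s = k = 2`, i.e. `r = 2 ^ 4 = 16`.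
-/

open Real

theorem GelfondSchneider.exists_rat_eq_of_isAlgebraic_rpow (hGS : GelfondSchneider) {x y : ℝ}
    (hx : 0 < x) (hx1 : x ≠ 1) (hxa : IsAlgebraic ℚ x) (hya : IsAlgebraic ℚ y)
    (h : IsAlgebraic ℚ (x ^ y)) : ∃ q : ℚ, (q : ℝ) = y := by
  by_contra hy
  refine hGS x y hxa.algebraMap hya.algebraMap (by exact_mod_cast hx.ne') (by exact_mod_cast hx1)
    ?_ ?_
  · rintro ⟨q, hq⟩
    exact hy ⟨q, by exact_mod_cast hq⟩
  · rw [← Complex.ofReal_cpow hx.le]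
    exact h.algebraMap

theorem Rat.den_eq_one_of_pow_eq_natCast {a : ℚ} {k n : ℕ} (hk : k ≠ 0) (h : a ^ k = n) :
    a.den = 1 := by
  have hden : a.den ^ k = 1 := by rw [← Rat.den_pow, h, Rat.den_natCast]
  exact (pow_eq_one_iff_left hk).mp hden

theorem Rat.exists_natCast_eq_of_rpow_eq_natCast {a b : ℚ} {n : ℕ} (ha : 0 ≤ a) (hb : 0 < b)
    (h : (a : ℝ) ^ (b : ℝ) = n) : ∃ m : ℕ, (m : ℝ) = a := by
  have hpow : a ^ b.num.natAbs = (n ^ b.den : ℕ) := by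
    have hnum : ((b.num.natAbs : ℕ) : ℝ) = (b : ℝ) * b.den := by
      rw [Nat.cast_natAbs, abs_of_pos (Rat.num_pos.mpr hb)]
      exact_mod_cast (Rat.mul_den_eq_num b).symm
    have : (a : ℝ) ^ b.num.natAbs = (n : ℝ) ^ b.den := by
      rw [← Real.rpow_natCast, hnum, Real.rpow_mul (by exact_mod_cast ha), h, Real.rpow_natCast]
    exact_mod_cast this
  have hden := Rat.den_eq_one_of_pow_eq_natCast (by simpa using hb.ne') hpow
  refine ⟨a.num.toNat, ?_⟩
  have : ((a.num.toNat : ℤ) : ℚ) = a := by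
    rw [Int.toNat_of_nonneg (Rat.num_nonneg.mpr ha), (Rat.den_eq_one_iff a).mp hden]
  exact_mod_cast this

theorem Nat.add_one_lt_two_pow {j : ℕ} (hj : 2 ≤ j) : j + 1 < 2 ^ j := by
  have h := Nat.lt_two_pow_self (n := j - 1)
  have h2 : 2 ^ j = 2 * 2 ^ (j - 1) := by rw [← pow_succ']; congr 1; omega
  omega

theorem Nat.eq_two_and_eq_four_of_pow_eq_pow {m n : ℕ} (hm : 0 < m) (hmn : m < n)
    (h : m ^ n = n ^ m) : m = 2 ∧ n = 4 := by
  have hm2 : 2 ≤ m := by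
    by_contra! hm1
    obtain rfl : m = 1 := by omega
    simp only [one_pow, pow_one] at h
    omega
  obtain ⟨k, rfl⟩ : m ∣ n := by
    rw [← Nat.pow_dvd_pow_iff hm.ne', ← h]
    exact Nat.pow_dvd_pow m hmn.le
  obtain ⟨j, rfl⟩ : ∃ j, k = j + 2 :=
    ⟨k - 2, by have := (Nat.lt_mul_iff_one_lt_right hm).mp hmn; omega⟩
  have hk : m ^ (j + 2) = m * (j + 2) := by
    refine Nat.pow_left_injective hm.ne' ?_
    simpa only [← pow_mul, mul_comm (j + 2)] using h
  have hj : m ^ (j + 1) = j + 2 := by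
    rw [pow_succ'] at hk
    exact Nat.eq_of_mul_eq_mul_left hm hk
  obtain rfl : j = 0 := by
    by_contra! hj0
    have := Nat.add_one_lt_two_pow (j := j + 1) (by omega)
    have := Nat.pow_le_pow_left hm2 (j + 1)
    omega
  obtain rfl : m = 2 := by simpa using hj
  simp

theorem Real.ne_one_of_rpow_eq_rpow {x y : ℝ} (hxy : x ≠ y) (h : x ^ y = y ^ x) : x ≠ 1 := by
  rintro rfl
  rw [Real.one_rpow, Real.rpow_one] at h
  exact hxy h

theorem not_both_algebraic_general
    (hGS : ∀ α β : ℂ, IsAlgebraic ℚ α → IsAlgebraic ℚ β → α ≠ 0 → α ≠ 1 →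
      (¬∃ q : ℚ, (q : ℂ) = β) → Transcendental ℚ (α ^ β))
    (r : ℕ) (hr16 : r ≠ 16)
    (s t : ℝ) (hs : 0 < s) (hst : s < t)
    (h1 : s ^ t = (r : ℝ)) (h2 : t ^ s = (r : ℝ)) :
    ¬(IsAlgebraic ℚ s ∧ IsAlgebraic ℚ t) := by
  rintro ⟨hsa, hta⟩
  have ht : 0 < t := hs.trans hst
  have hcomm : s ^ t = t ^ s := h1.trans h2.symm
  obtain ⟨b, rfl⟩ := GelfondSchneider.exists_rat_eq_of_isAlgebraic_rpow hGS hs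
    (Real.ne_one_of_rpow_eq_rpow hst.ne hcomm) hsa hta (h1 ▸ isAlgebraic_natCast r)
  obtain ⟨a, rfl⟩ := GelfondSchneider.exists_rat_eq_of_isAlgebraic_rpow hGS ht
    (Real.ne_one_of_rpow_eq_rpow hst.ne' hcomm.symm) hta hsa (h2 ▸ isAlgebraic_natCast r)
  obtain ⟨m, hm⟩ := Rat.exists_natCast_eq_of_rpow_eq_natCast (by exact_mod_cast hs.le)
    (by exact_mod_cast ht) h1
  obtain ⟨n, hn⟩ := Rat.exists_natCast_eq_of_rpow_eq_natCast (by exact_mod_cast ht.le)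
    (by exact_mod_cast hs) h2
  rw [← hm, ← hn, Real.rpow_natCast] at h1 h2
  rw [← hm, ← hn] at hst
  rw [← hm] at hs
  obtain ⟨rfl, rfl⟩ := Nat.eq_two_and_eq_four_of_pow_eq_pow (by exact_mod_cast hs)
    (by exact_mod_cast hst) (by exact_mod_cast h1.trans h2.symm)
  norm_num at h1
  exact hr16 (by exact_mod_cast h1.symm)

/-- Assuming Gelfond–Schneider, if `r ∈ ℕ`, `r > e^e`, `r ≠ 16`, and
`0 < s < t` satisfy `s^t = t^s = r`, then at least one of `s, t` is
transcendental. -/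
theorem not_both_algebraic
    (hGS : ∀ α β : ℂ, IsAlgebraic ℚ α → IsAlgebraic ℚ β → α ≠ 0 → α ≠ 1 →
      (¬∃ q : ℚ, (q : ℂ) = β) → Transcendental ℚ (α ^ β))
    (r : ℕ) (hr : exp 1 ^ exp 1 < (r : ℝ)) (hr16 : r ≠ 16)
    (s t : ℝ) (hs : 0 < s) (hst : s < t)
    (h1 : s ^ t = (r : ℝ)) (h2 : t ^ s = (r : ℝ)) :
    ¬(IsAlgebraic ℚ s ∧ IsAlgebraic ℚ t) :=
  not_both_algebraic_general hGS r hr16 s t hs hst h1 h2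
end

section
/- Assume Schanuel's conjecture. Then the numbers e, e^e, e^{e^e}, ... (the tower E₀ = e, Eₙ₊₁ = e^{Eₙ}) are algebraically independent over ℚ. -/
/-!
Write `Eᵢ` for `expTower i`. Apply Schanuel's conjecture to `1, E₀, …, E_{n-1}`, which are
ℚ-linearly independent because `E₀, …, E_{n-1}` are algebraically independent (induction). Their
exponentials are `E₀, …, E_n`, and each `E_{i+1}` is itself an exponential `exp Eᵢ`, so the `n + 1`
algebraically independent numbers Schanuel provides lie among `1, E₀, …, E_n`. None of them is the
algebraic number `1`, so, being distinct, they are exactly `E₀, …, E_n`.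
-/

/-- Schanuel's conjecture. -/
def SchanuelConjecture : Prop :=
  ∀ (n : ℕ) (α : Fin n → ℂ), LinearIndependent ℚ α →
    ∃ g : Fin n → ℂ,
      (∀ i, g i ∈ Set.range α ∪ Set.range (fun i => Complex.exp (α i))) ∧
      AlgebraicIndependent ℚ g

/-- The exponential tower `e, e^e, e^{e^e}, …`. -/
noncomputable def expTower : ℕ → ℝ
  | 0 => Real.exp 1
  | n + 1 => Real.exp (expTower n)

theorem AlgebraicIndependent.linearIndependent_cons_one {R A : Type*} [CommRing R] [CommRing A]
    [Algebra R A] {m : ℕ} {x : Fin m → A} (hx : AlgebraicIndependent R x) :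
    LinearIndependent R (Fin.cons 1 x : Fin (m + 1) → A) := by
  have hexponents : Function.Injective
      (Fin.cons 0 (fun j => Finsupp.single j 1) : Fin (m + 1) → Fin m →₀ ℕ) :=
    Fin.cons_injective_iff.2 ⟨fun ⟨_, hj⟩ => Finsupp.single_ne_zero.2 one_ne_zero hj,
      Finsupp.single_left_injective one_ne_zero⟩
  have hmonomials := (MvPolynomial.basisMonomials (Fin m) R).linearIndependent.comp _ hexponents
  have hcons : (Fin.cons 1 x : Fin (m + 1) → A) = MvPolynomial.aeval x ∘
      MvPolynomial.basisMonomials (Fin m) R ∘ Fin.cons 0 (fun j => Finsupp.single j 1) := by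
    funext i
    refine Fin.cases ?_ (fun j => ?_) i <;> simp [MvPolynomial.aeval_monomial]
  rw [hcons]
  exact hmonomials.map' (MvPolynomial.aeval x).toLinearMap
    (LinearMap.ker_eq_bot.2 (algebraicIndependent_iff_injective_aeval.1 hx))

theorem AlgebraicIndependent.of_forall_mem_range {ι R A : Type*} [Finite ι] [CommRing R]
    [Nontrivial R] [CommRing A] [Algebra R A] {g T : ι → A} (hg : AlgebraicIndependent R g)
    (h : ∀ j, g j ∈ Set.range T) : AlgebraicIndependent R T := by
  choose σ hσ using h
  have hσ_inj : Function.Injective σ := fun a b hab => hg.injective (by rw [← hσ a, ← hσ b, hab])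
  exact (algebraicIndependent_equiv' (Equiv.ofBijective σ hσ_inj.bijective_of_finite)
    (funext hσ)).1 hg

theorem SchanuelConjecture.algebraicIndependent_exp (hS : SchanuelConjecture) {n : ℕ}
    {α : Fin n → ℂ} (hα : LinearIndependent ℚ α)
    (hα_exp : ∀ i, IsAlgebraic ℚ (α i) ∨ α i ∈ Set.range (Complex.exp ∘ α)) :
    AlgebraicIndependent ℚ (Complex.exp ∘ α) := by
  obtain ⟨g, hg_mem, hg⟩ := hS n α hα
  refine hg.of_forall_mem_range fun j => ?_
  rcases hg_mem j with ⟨i, hi⟩ | hj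
  · rcases hα_exp i with halg | hexp
    · exact absurd (hi ▸ halg) (hg.transcendental j)
    · exact hi ▸ hexp
  · exact hj

theorem exp_comp_cons_one_expTower (m : ℕ) :
    Complex.exp ∘ (Fin.cons 1 (fun i : Fin m => (expTower i : ℂ)) : Fin (m + 1) → ℂ) =
      fun i : Fin (m + 1) => (expTower i : ℂ) := by
  funext i
  refine Fin.cases ?_ (fun i => ?_) i <;> simp [expTower, Complex.ofReal_exp]

theorem algebraicIndependent_complex_expTower (hS : SchanuelConjecture) :
    ∀ m : ℕ, AlgebraicIndependent ℚ (fun i : Fin m => (expTower i : ℂ))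
  | 0 => algebraicIndependent_empty_type
  | m + 1 => by
    rw [← exp_comp_cons_one_expTower]
    refine hS.algebraicIndependent_exp
      (algebraicIndependent_complex_expTower hS m).linearIndependent_cons_one fun i => ?_
    refine Fin.cases (Or.inl isAlgebraic_one) (fun i => Or.inr ⟨i.castSucc, ?_⟩) i
    rw [exp_comp_cons_one_expTower]
    simp

/-- Schanuel's conjecture implies the numbers `e, e^e, e^{e^e}, …` are
algebraically independent over ℚ. -/
theorem expTower_algebraicIndependent (hS : SchanuelConjecture) (n : ℕ) :
    AlgebraicIndependent ℚ (fun i : Fin (n + 1) => expTower i) :=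
  .of_comp (Complex.ofRealAm.restrictScalars ℚ) (algebraicIndependent_complex_expTower hS (n + 1))
end

section
/- Assume Schanuel's conjecture. Let z and w be complex numbers, neither equal to 0 or 1, such that z^w and w^z are algebraic (for some fixed choices of logarithms of z and w). Then z and w are either both rational or both transcendental. -/
open Complex Set

theorem AlgebraicIndependent.card_le_of_isAlgebraic_adjoin {R A ι : Type*} [CommRing R]
    [CommRing A] [IsDomain A] [Algebra R A] [FaithfulSMul R A] [Fintype ι] {x : ι → A}
    (hx : AlgebraicIndependent R x) (s : Finset A)
    (h : ∀ i, IsAlgebraic (Algebra.adjoin R (s : Set A)) (x i)) :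
    Fintype.card ι ≤ s.card := by
  let M := AlgebraicIndependent.matroid R A
  have hsub : range x ⊆ M.closure s := by
    rintro _ ⟨i, rfl⟩
    rw [AlgebraicIndependent.matroid_closure_eq, SetLike.mem_coe, Subalgebra.mem_algebraicClosure]
    exact h i
  have hle : (range x).encard ≤ (s : Set A).encard := calc
    (range x).encard ≤ M.eRk (M.closure s) :=
      Matroid.Indep.encard_le_eRk_of_subset hx.to_subtype_range hsub
    _ = M.eRk s := M.eRk_closure_eq _
    _ ≤ (s : Set A).encard := M.eRk_le_encard _
  have := (algebraMap R A).domain_nontrivial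
  rw [← image_univ, hx.injective.encard_image, encard_univ,
    encard_coe_eq_coe_finsetCard] at hle
  simpa using hle

theorem isAlgebraic_adjoin_of_mem {R A : Type*} [CommRing R] [CommRing A] [Nontrivial A]
    [Algebra R A] {s : Set A} {x : A} (hx : x ∈ s) : IsAlgebraic (Algebra.adjoin R s) x :=
  isAlgebraic_algebraMap (⟨x, Algebra.subset_adjoin hx⟩ : Algebra.adjoin R s)

theorem IsAlgebraic.tower_top_adjoin {K A : Type*} [Field K] [CommRing A] [Nontrivial A]
    [Algebra K A] {s : Set A} {x : A} (hx : IsAlgebraic K x) :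
    IsAlgebraic (Algebra.adjoin K s) x :=
  hx.extendScalars (algebraMap K _).injective

theorem IsAlgebraic.ratCast_add_ratCast_mul {R A : Type*} [CommRing R] [IsDomain R] [Field A]
    [Algebra ℚ R] [Algebra R A] [Algebra ℚ A] [IsScalarTower ℚ R A] {x : A}
    (hx : IsAlgebraic R x) (p q : ℚ) : IsAlgebraic R ((p : A) + q * x) := by
  have hrat : ∀ r : ℚ, IsAlgebraic R (r : A) := fun r =>
    (isAlgebraic_ratCast ℚ r).extendScalars (algebraMap ℚ R).injective
  exact (hrat p).add ((hrat q).mul hx)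

theorem IsAlgebraic.of_zpow {K L : Type*} [Field K] [Field L] [Algebra K L] {x : L} {n : ℤ}
    (hn : n ≠ 0) (hx : IsAlgebraic K (x ^ n)) : IsAlgebraic K x := by
  rcases Int.natAbs_eq n with h | h <;> rw [h] at hx
  · exact (zpow_natCast x _ ▸ hx).of_pow (Int.natAbs_pos.2 hn)
  · rw [zpow_neg, IsAlgebraic.inv_iff, zpow_natCast] at hx
    exact hx.of_pow (Int.natAbs_pos.2 hn)

theorem Transcendental.eq_zero_of_add_mul_eq_zero {K L : Type*} [Field K] [Field L]
    [Algebra K L] {z c₀ c₁ : L} (hz : Transcendental K z) (h₀ : IsAlgebraic K c₀)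
    (h₁ : IsAlgebraic K c₁) (h : c₀ + c₁ * z = 0) : c₁ = 0 := by
  by_contra hc
  have hz_eq : z = -c₀ * c₁⁻¹ := by
    field_simp
    linear_combination h
  exact hz (hz_eq ▸ h₀.neg.mul h₁.inv)

theorem rat_eq_zero_of_add_mul_eq_zero {K : Type*} [Field K] [CharZero K] {w : K}
    (hw : ∀ q : ℚ, w ≠ q) {a b : ℚ} (h : (a : K) + b * w = 0) : a = 0 ∧ b = 0 := by
  by_cases hb : b = 0
  · subst hb
    simpa using h
  · refine absurd ?_ (hw (-a / b))
    push_cast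
    field_simp
    linear_combination h

theorem linearIndependent_pair_mul {K : Type*} [Field K] [CharZero K] {w lam : K}
    (hw : ∀ q : ℚ, w ≠ q) (hlam : lam ≠ 0) : LinearIndependent ℚ ![lam, w * lam] := by
  refine LinearIndependent.pair_iff.2 fun a b h => rat_eq_zero_of_add_mul_eq_zero hw ?_
  rw [Rat.smul_def, Rat.smul_def] at h
  exact (mul_eq_zero.1 (by linear_combination h)).resolve_right hlam

theorem exists_rat_mul_of_not_linearIndependent {K : Type*} [Field K] [CharZero K] {w lam x : K}
    (hw : ∀ q : ℚ, w ≠ q) (hlam : lam ≠ 0) (h : ¬ LinearIndependent ℚ ![lam, w * lam, x]) :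
    ∃ p q : ℚ, x = (p + q * w) * lam := by
  have hx : x ∈ Submodule.span ℚ {lam, w * lam} := by
    by_contra hx
    rw [← Matrix.range_cons_cons_empty lam (w * lam) ![]] at hx
    exact h (by simpa using (linearIndependent_pair_mul hw hlam).finSnoc hx)
  obtain ⟨p, q, hpq⟩ := Submodule.mem_span_pair.1 hx
  exact ⟨p, q, by rw [← hpq, Rat.smul_def, Rat.smul_def]; ring⟩

theorem exists_mul_add_mul_eq_zero_of_not_linearIndependent {z w lam mu : ℂ}
    (hz : Transcendental ℚ z) (hw : ∀ q : ℚ, w ≠ q) (hlam : lam ≠ 0)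
    (h : ¬ LinearIndependent ℚ ![lam, mu, w * lam, z * mu]) :
    ∃ a b c d : ℚ, (b + d * z ≠ 0) ∧ (a + c * w) * lam + (b + d * z) * mu = 0 := by
  obtain ⟨g, hg, i, hi⟩ := Fintype.not_linearIndependent_iff.1 h
  simp only [Fin.sum_univ_four, Rat.smul_def, Matrix.cons_val_zero, Matrix.cons_val_one,
    Matrix.cons_val] at hg
  refine ⟨g 0, g 1, g 2, g 3, fun hB => ?_, by linear_combination hg⟩
  have hd : g 3 = 0 := by
    exact_mod_cast hz.eq_zero_of_add_mul_eq_zero (isAlgebraic_ratCast ℚ (g 1))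
      (isAlgebraic_ratCast ℚ (g 3)) hB
  have hb : g 1 = 0 := by simpa [hd] using hB
  have hA : (g 0 : ℂ) + g 2 * w = 0 :=
    (mul_eq_zero.1 (by linear_combination hg - mu * hB)).resolve_right hlam
  obtain ⟨ha, hc⟩ := rat_eq_zero_of_add_mul_eq_zero hw hA
  fin_cases i <;> simp_all

theorem isAlgebraic_exp_of_isAlgebraic_exp_rat_mul {q : ℚ} (hq : q ≠ 0) {mu : ℂ}
    (h : IsAlgebraic ℚ (exp (q * mu))) : IsAlgebraic ℚ (exp mu) := by
  have hpow : exp (q * mu) ^ q.den = exp mu ^ q.num := by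
    rw [← exp_nat_mul, ← exp_int_mul, ← mul_assoc]
    congr 1
    exact_mod_cast congrArg (fun r : ℚ => (r : ℂ) * mu) (Rat.den_mul_eq_num q)
  exact (hpow ▸ h.pow q.den).of_zpow (Rat.num_ne_zero.2 hq)

namespace SchanuelConjecture

theorem not_linearIndependent (hS : SchanuelConjecture) {n : ℕ} (α : Fin n → ℂ) (s : Finset ℂ)
    (hs : s.card < n) (hα : ∀ i, IsAlgebraic (Algebra.adjoin ℚ (s : Set ℂ)) (α i))
    (hexp : ∀ i, IsAlgebraic (Algebra.adjoin ℚ (s : Set ℂ)) (exp (α i))) :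
    ¬ LinearIndependent ℚ α := by
  intro hlin
  obtain ⟨g, hg, hind⟩ := hS n α hlin
  have := hind.card_le_of_isAlgebraic_adjoin s fun i => by
    rcases hg i with ⟨j, hj⟩ | ⟨j, hj⟩ <;> rw [← hj]
    exacts [hα j, hexp j]
  simp only [Fintype.card_fin] at this
  omega

theorem gelfond_schneider (hS : SchanuelConjecture) {w lam : ℂ} (hlam : lam ≠ 0)
    (hexp : IsAlgebraic ℚ (exp lam)) (hw : IsAlgebraic ℚ w)
    (hwexp : IsAlgebraic ℚ (exp (w * lam))) : ∃ q : ℚ, w = q := by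
  by_contra! hirr
  have hlam_s : IsAlgebraic (Algebra.adjoin ℚ (({lam} : Finset ℂ) : Set ℂ)) lam :=
    isAlgebraic_adjoin_of_mem (by simp)
  refine hS.not_linearIndependent ![lam, w * lam] {lam} (by simp) (fun i => ?_) (fun i => ?_)
    (linearIndependent_pair_mul hirr hlam)
  all_goals fin_cases i
  exacts [hlam_s, hw.tower_top_adjoin.mul hlam_s, hexp.tower_top_adjoin, hwexp.tower_top_adjoin]

theorem isAlgebraic_adjoin_of_transcendental (hS : SchanuelConjecture) {z w lam mu : ℂ}
    (hlam : lam ≠ 0) (hl : exp lam = z) (hm : exp mu = w) (hzw : IsAlgebraic ℚ (exp (w * lam)))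
    (hwz : IsAlgebraic ℚ (exp (z * mu))) (hw : IsAlgebraic ℚ w) (hirr : ∀ q : ℚ, w ≠ q)
    (hz : Transcendental ℚ z) :
    IsAlgebraic (Algebra.adjoin ℚ (({lam, z} : Finset ℂ) : Set ℂ)) mu := by
  have hmem : ∀ x ∈ ({lam, mu, z} : Finset ℂ),
      IsAlgebraic (Algebra.adjoin ℚ (({lam, mu, z} : Finset ℂ) : Set ℂ)) x :=
    fun _ hx => isAlgebraic_adjoin_of_mem hx
  have hdep := hS.not_linearIndependent ![lam, mu, w * lam, z * mu] {lam, mu, z}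
    (Finset.card_le_three.trans_lt (by norm_num))
    (fun i => by
      fin_cases i
      exacts [hmem lam (by simp), hmem mu (by simp), hw.tower_top_adjoin.mul (hmem lam (by simp)),
        (hmem z (by simp)).mul (hmem mu (by simp))])
    (fun i => by
      fin_cases i
      exacts [hl ▸ hmem z (by simp), (hm ▸ hw).tower_top_adjoin, hzw.tower_top_adjoin,
        hwz.tower_top_adjoin])
  obtain ⟨a, b, c, d, hB, hrel⟩ :=
    exists_mul_add_mul_eq_zero_of_not_linearIndependent hz hirr hlam hdep
  have hmu_eq : mu = -((a + c * w) * lam) * (b + d * z)⁻¹ := by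
    field_simp
    linear_combination hrel
  have hlam_s : IsAlgebraic (Algebra.adjoin ℚ (({lam, z} : Finset ℂ) : Set ℂ)) lam :=
    isAlgebraic_adjoin_of_mem (by simp)
  have hz_s : IsAlgebraic (Algebra.adjoin ℚ (({lam, z} : Finset ℂ) : Set ℂ)) z :=
    isAlgebraic_adjoin_of_mem (by simp)
  rw [hmu_eq]
  exact ((hw.tower_top_adjoin.ratCast_add_ratCast_mul a c).mul hlam_s).neg.mul
    (hz_s.ratCast_add_ratCast_mul b d).inv

theorem false_of_isAlgebraic_of_transcendental (hS : SchanuelConjecture) {z w lam mu : ℂ}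
    (hlam : lam ≠ 0) (hmu : mu ≠ 0) (hl : exp lam = z) (hm : exp mu = w)
    (hzw : IsAlgebraic ℚ (exp (w * lam))) (hwz : IsAlgebraic ℚ (exp (z * mu)))
    (hw : IsAlgebraic ℚ w) (hirr : ∀ q : ℚ, w ≠ q) (hz : Transcendental ℚ z) : False := by
  set s : Finset ℂ := {lam, z}
  have hlam_s : IsAlgebraic (Algebra.adjoin ℚ (s : Set ℂ)) lam :=
    isAlgebraic_adjoin_of_mem (by simp [s])
  have hz_s : IsAlgebraic (Algebra.adjoin ℚ (s : Set ℂ)) z :=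
    isAlgebraic_adjoin_of_mem (by simp [s])
  have hw_s : IsAlgebraic (Algebra.adjoin ℚ (s : Set ℂ)) w := hw.tower_top_adjoin
  have hmu_s := hS.isAlgebraic_adjoin_of_transcendental hlam hl hm hzw hwz hw hirr hz
  have hmul : ∀ x, IsAlgebraic (Algebra.adjoin ℚ (s : Set ℂ)) x →
      IsAlgebraic (Algebra.adjoin ℚ (s : Set ℂ)) (exp x) → ∃ p q : ℚ, x = (p + q * w) * lam :=
    fun x hx hexp => exists_rat_mul_of_not_linearIndependent hirr hlam <|
      hS.not_linearIndependent ![lam, w * lam, x] s (Finset.card_le_two.trans_lt (by norm_num))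
        (fun i => by fin_cases i; exacts [hlam_s, hw_s.mul hlam_s, hx])
        (fun i => by fin_cases i; exacts [hl ▸ hz_s, hzw.tower_top_adjoin, hexp])
  obtain ⟨p, q, hpq⟩ := hmul mu hmu_s (hm ▸ hw_s)
  obtain ⟨r, t, hrt⟩ := hmul (z * mu) (hz_s.mul hmu_s) hwz.tower_top_adjoin
  have hpq0 : (p + q * w : ℂ) = 0 :=
    hz.eq_zero_of_add_mul_eq_zero (hw.ratCast_add_ratCast_mul r t).neg
      (hw.ratCast_add_ratCast_mul p q)
      (mul_right_cancel₀ hlam (by linear_combination hrt - z * hpq))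
  exact hmu (by rw [hpq, hpq0, zero_mul])

theorem isAlgebraic_of_isAlgebraic_of_exp_mul (hS : SchanuelConjecture) {z w lam mu : ℂ}
    (hlam : lam ≠ 0) (hmu : mu ≠ 0) (hl : exp lam = z) (hm : exp mu = w)
    (hzw : IsAlgebraic ℚ (exp (w * lam))) (hwz : IsAlgebraic ℚ (exp (z * mu)))
    (hz : IsAlgebraic ℚ z) : IsAlgebraic ℚ w := by
  by_contra hw
  by_cases hzq : ∃ q : ℚ, z = q
  · obtain ⟨q, rfl⟩ := hzq
    have hq : q ≠ 0 := by
      rintro rfl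
      simp at hl
    exact hw (hm ▸ isAlgebraic_exp_of_isAlgebraic_exp_rat_mul hq hwz)
  · exact hS.false_of_isAlgebraic_of_transcendental hmu hlam hm hl hwz hzw hz
      (fun q hq => hzq ⟨q, hq⟩) hw

end SchanuelConjecture

theorem both_rational_or_both_transcendental_general (hS : SchanuelConjecture)
    (z w lam mu : ℂ)
    (hz1 : z ≠ 1) (hw1 : w ≠ 1)
    (hl : Complex.exp lam = z) (hm : Complex.exp mu = w)
    (hzw : IsAlgebraic ℚ (Complex.exp (w * lam)))
    (hwz : IsAlgebraic ℚ (Complex.exp (z * mu))) :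
    ((∃ q : ℚ, z = (q : ℂ)) ∧ (∃ q : ℚ, w = (q : ℂ))) ∨
      (Transcendental ℚ z ∧ Transcendental ℚ w) := by
  have hlam : lam ≠ 0 := by
    rintro rfl
    exact hz1 (by rw [← hl, exp_zero])
  have hmu : mu ≠ 0 := by
    rintro rfl
    exact hw1 (by rw [← hm, exp_zero])
  by_cases hz : IsAlgebraic ℚ z
  · have hw := hS.isAlgebraic_of_isAlgebraic_of_exp_mul hlam hmu hl hm hzw hwz hz
    exact Or.inl ⟨hS.gelfond_schneider hmu (hm ▸ hw) hz hwz,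
      hS.gelfond_schneider hlam (hl ▸ hz) hw hzw⟩
  · exact Or.inr ⟨hz, fun hw => hz (hS.isAlgebraic_of_isAlgebraic_of_exp_mul hmu hlam hm hl hwz hzw hw)⟩

/-- Main theorem: assuming Schanuel's conjecture, if `z, w ∉ {0,1}` and
`z^w = exp (w·λ)` and `w^z = exp (z·μ)` are algebraic (where `exp λ = z`,
`exp μ = w`), then `z` and `w` are both rational or both transcendental. -/
theorem both_rational_or_both_transcendental (hS : SchanuelConjecture)
    (z w lam mu : ℂ)
    (hz0 : z ≠ 0) (hz1 : z ≠ 1) (hw0 : w ≠ 0) (hw1 : w ≠ 1)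
    (hl : Complex.exp lam = z) (hm : Complex.exp mu = w)
    (hzw : IsAlgebraic ℚ (Complex.exp (w * lam)))
    (hwz : IsAlgebraic ℚ (Complex.exp (z * mu))) :
    ((∃ q : ℚ, z = (q : ℂ)) ∧ (∃ q : ℚ, w = (q : ℂ))) ∨
      (Transcendental ℚ z ∧ Transcendental ℚ w) :=
  both_rational_or_both_transcendental_general hS z w lam mu hz1 hw1 hl hm hzw hwz
end

section
/- Assume Schanuel's conjecture. Then there exist transcendental positive real numbers x, y and transcendental positive reals s ≠ t such that x^y, y^x, s^t, t^s are all integers, with x^y ≠ y^x and s^t = t^s. -/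
open Set Real

section

variable {K L : Type*} [Field K] [Field L] [Algebra K L]

theorem AlgebraicIndependent.encard_le_of_isAlgebraic {ι : Type*} {g : ι → L}
    (hg : AlgebraicIndependent K g) {T : Set L}
    (hT : ∀ i, IsAlgebraic (IntermediateField.adjoin K T) (g i)) :
    ENat.card ι ≤ T.encard := by
  let M := AlgebraicIndependent.matroid K L
  have hindep : M.Indep (range g) := AlgebraicIndependent.matroid_indep_iff.2 hg.to_subtype_range
  have hsub : range g ⊆ M.closure T := by
    rintro _ ⟨i, rfl⟩
    rw [AlgebraicIndependent.matroid_closure_eq, SetLike.mem_coe,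
      Subalgebra.mem_algebraicClosure, ← IntermediateField.isAlgebraic_adjoin_iff]
    exact hT i
  calc ENat.card ι ≤ (range g).encard := hg.injective.encard_range
    _ ≤ M.eRk (M.closure T) := hindep.encard_le_eRk_of_subset hsub
    _ = M.eRk T := M.eRk_closure_eq T
    _ ≤ T.encard := M.eRk_le_encard T

theorem mem_algebraicClosure_adjoin_of_mem {T : Set L} {z : L} (hz : z ∈ T) :
    z ∈ algebraicClosure (IntermediateField.adjoin K T) L :=
  mem_algebraicClosure_iff.2 <|
    isAlgebraic_algebraMap (⟨z, IntermediateField.subset_adjoin K T hz⟩ :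
      IntermediateField.adjoin K T)

theorem mem_algebraicClosure_adjoin_of_isAlgebraic (T : Set L) {z : L} (hz : IsAlgebraic K z) :
    z ∈ algebraicClosure (IntermediateField.adjoin K T) L :=
  mem_algebraicClosure_iff.2 (hz.tower_top _)

end

theorem SchanuelConjecture.exists_algebraicIndependent_real (hS : SchanuelConjecture) {n : ℕ}
    {α : Fin n → ℝ} (hα : LinearIndependent ℚ α) :
    ∃ g : Fin n → ℝ, (∀ i, g i ∈ range α ∪ range (fun i => exp (α i))) ∧
      AlgebraicIndependent ℚ g := by
  let ι : ℝ →ₐ[ℚ] ℂ := Complex.ofRealAm.restrictScalars ℚ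
  obtain ⟨g, hgα, hg⟩ := hS n (ι ∘ α)
    (hα.map' ι.toLinearMap (LinearMap.ker_eq_bot.2 Complex.ofReal_injective))
  have hreal : ∀ i, ∃ r ∈ range α ∪ range (fun i => exp (α i)), ι r = g i := by
    intro i
    rcases hgα i with ⟨j, hj⟩ | ⟨j, hj⟩
    · exact ⟨α j, .inl ⟨j, rfl⟩, hj⟩
    · exact ⟨exp (α j), .inr ⟨j, rfl⟩, by simpa [ι] using hj⟩
  choose r hrα hr using hreal
  refine ⟨r, hrα, AlgebraicIndependent.of_comp ι ?_⟩
  rwa [show ι ∘ r = g from funext hr]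

theorem SchanuelConjecture.le_card (hS : SchanuelConjecture) {n : ℕ} {α : Fin n → ℝ}
    (hα : LinearIndependent ℚ α) {T : Finset ℝ}
    (hlog : ∀ i, α i ∈ algebraicClosure (IntermediateField.adjoin ℚ (T : Set ℝ)) ℝ)
    (hexp : ∀ i, exp (α i) ∈ algebraicClosure (IntermediateField.adjoin ℚ (T : Set ℝ)) ℝ) :
    n ≤ T.card := by
  obtain ⟨g, hgα, hg⟩ := hS.exists_algebraicIndependent_real hα
  have := hg.encard_le_of_isAlgebraic fun i ↦ mem_algebraicClosure_iff.1 <| by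
    rcases hgα i with ⟨j, hj⟩ | ⟨j, hj⟩ <;> rw [← hj]
    exacts [hlog j, hexp j]
  simpa [encard_coe_eq_coe_finsetCard] using this

theorem SchanuelConjecture.transcendental_rpow (hS : SchanuelConjecture) {u v : ℝ} (hu : 0 < u)
    (hu₁ : u ≠ 1) (hu_alg : IsAlgebraic ℚ u) (hv_alg : IsAlgebraic ℚ v) (hv : Irrational v) :
    Transcendental ℚ (u ^ v) := by
  intro huv
  have hlog : log u ≠ 0 := log_ne_zero_of_pos_of_ne_one hu hu₁
  have hα : LinearIndependent ℚ ![log u, v * log u] := by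
    refine LinearIndependent.pair_iff.2 fun s t hst ↦ ?_
    have hst' : ((s : ℝ) + t * v) * log u = 0 := by
      rw [Rat.smul_def, Rat.smul_def] at hst; linear_combination hst
    have hsv : (s : ℝ) + t * v = 0 := (mul_eq_zero.1 hst').resolve_right hlog
    obtain rfl : t = 0 := by
      by_contra ht
      exact hv ⟨-s / t, by push_cast; field_simp; linear_combination -hsv⟩
    simpa using hsv
  set K := algebraicClosure (IntermediateField.adjoin ℚ (({log u} : Finset ℝ) : Set ℝ)) ℝ
  have hlog_u : log u ∈ K := mem_algebraicClosure_adjoin_of_mem (by simp)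
  have hlog_uv : v * log u ∈ K :=
    mul_mem (mem_algebraicClosure_adjoin_of_isAlgebraic _ hv_alg) hlog_u
  have hexp_u : exp (log u) ∈ K := by
    rw [exp_log hu]; exact mem_algebraicClosure_adjoin_of_isAlgebraic _ hu_alg
  have hexp_uv : exp (v * log u) ∈ K := by
    rw [mul_comm, ← rpow_def_of_pos hu]; exact mem_algebraicClosure_adjoin_of_isAlgebraic _ huv
  have h2 := hS.le_card (T := {log u}) hα
    (fun i ↦ by fin_cases i; exacts [hlog_u, hlog_uv])
    (fun i ↦ by fin_cases i; exacts [hexp_u, hexp_uv])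
  simp at h2

theorem isAlgebraic_rpow_ratCast {c : ℝ} (hc : 0 < c) (hc_alg : IsAlgebraic ℚ c) (r : ℚ) :
    IsAlgebraic ℚ (c ^ (r : ℝ)) := by
  refine IsAlgebraic.of_pow r.pos ?_
  have hpow : (c ^ (r : ℝ)) ^ r.den = c ^ r.num := by
    rw [← rpow_natCast, ← rpow_mul hc.le, ← rpow_intCast]
    congr 1
    exact_mod_cast Rat.mul_den_eq_num r
  rw [hpow, ← mem_algebraicClosure_iff] at *
  exact zpow_mem hc_alg _

theorem linearIndependent_log_of_mul_log_eq {x y L : ℝ} {a b : ℚ} (hx : Irrational x)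
    (hx_alg : IsAlgebraic ℚ x) (hy : Transcendental ℚ y) (hL : L ≠ 0) (ha : a ≠ 0) (hb : b ≠ 0)
    (hxy : y * log x = a * L) (hyx : x * log y = b * L) :
    LinearIndependent ℚ ![log x, log y, L] := by
  refine Fintype.linearIndependent_iff.2 fun r hr ↦ ?_
  simp only [Fin.sum_univ_three, Matrix.cons_val_zero, Matrix.cons_val_one, Matrix.cons_val_two,
    Matrix.head_cons, Matrix.tail_cons, Rat.smul_def] at hr
  have hrel : r 0 * a * x + y * (r 1 * b + r 2 * x) = 0 := by
    refine mul_left_cancel₀ hL ?_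
    linear_combination x * y * hr - r 0 * x * hxy - r 1 * y * hyx
  have hcoef : (r 1 : ℝ) * b + r 2 * x = 0 := by
    by_contra hne
    refine hy ?_
    have hy_eq : y = -(r 0 * a * x) / (r 1 * b + r 2 * x) :=
      eq_div_of_mul_eq hne (by linear_combination hrel)
    rw [hy_eq, ← mem_algebraicClosure_iff]
    have hxK : x ∈ algebraicClosure ℚ ℝ := mem_algebraicClosure_iff.2 hx_alg
    have hq (q : ℚ) : (q : ℝ) ∈ algebraicClosure ℚ ℝ := SubfieldClass.ratCast_mem _ q
    exact div_mem (neg_mem (mul_mem (mul_mem (hq _) (hq _)) hxK))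
      (add_mem (mul_mem (hq _) (hq _)) (mul_mem (hq _) hxK))
  have hr2 : r 2 = 0 := by
    by_contra hne
    exact hx ⟨-(r 1 * b) / r 2, by push_cast; field_simp; linear_combination -hcoef⟩
  have hr1 : r 1 = 0 := by
    simpa [hr2, hb] using hcoef
  have hr0 : r 0 = 0 := by
    simpa [hr1, hr2, ha, hx.ne_zero] using hrel
  intro i
  fin_cases i <;> assumption

theorem SchanuelConjecture.isAlgebraic_of_mul_log_eq (hS : SchanuelConjecture) {x y L : ℝ}
    {a b : ℚ} (hx : 0 < x) (hy : 0 < y) (hL : L ≠ 0) (hL_alg : IsAlgebraic ℚ (exp L))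
    (ha : a ≠ 0) (hb : b ≠ 0) (hxy : y * log x = a * L) (hyx : x * log y = b * L)
    (hx_alg : IsAlgebraic ℚ x) : IsAlgebraic ℚ y := by
  by_cases hx_irr : Irrational x
  swap
  · obtain ⟨q, rfl⟩ := not_not.1 hx_irr
    have hlog_y : log y = L * (b / q : ℚ) := by
      push_cast; field_simp; linear_combination hyx
    rw [← exp_log hy, hlog_y, exp_mul]
    exact isAlgebraic_rpow_ratCast (exp_pos L) hL_alg _
  by_contra hy_tr
  have hα := linearIndependent_log_of_mul_log_eq hx_irr hx_alg hy_tr hL ha hb hxy hyx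
  set K := algebraicClosure (IntermediateField.adjoin ℚ (({log y, y} : Finset ℝ) : Set ℝ)) ℝ
  have hq (q : ℚ) : (q : ℝ) ∈ K := SubfieldClass.ratCast_mem _ q
  have hlog_y : log y ∈ K := mem_algebraicClosure_adjoin_of_mem (by simp)
  have hy_K : y ∈ K := mem_algebraicClosure_adjoin_of_mem (by simp)
  have hL_K : L ∈ K := by
    rw [show L = x * log y / b by field_simp; linear_combination -hyx]
    exact div_mem (mul_mem (mem_algebraicClosure_adjoin_of_isAlgebraic _ hx_alg) hlog_y) (hq b)
  have hlog_x : log x ∈ K := by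
    rw [show log x = a * L / y by field_simp; linear_combination hxy]
    exact div_mem (mul_mem (hq a) hL_K) hy_K
  have hexp_x : exp (log x) ∈ K := by
    rw [exp_log hx]; exact mem_algebraicClosure_adjoin_of_isAlgebraic _ hx_alg
  have hexp_y : exp (log y) ∈ K := by rwa [exp_log hy]
  have hexp_L : exp L ∈ K := mem_algebraicClosure_adjoin_of_isAlgebraic _ hL_alg
  have h3 := hS.le_card (T := {log y, y}) hα
    (fun i ↦ by fin_cases i; exacts [hlog_x, hlog_y, hL_K])
    (fun i ↦ by fin_cases i; exacts [hexp_x, hexp_y, hexp_L])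
  have h2 := Finset.card_le_two (a := log y) (b := y)
  omega

theorem irrational_of_rpow_ratCast_eq_prime {y : ℝ} {q : ℚ} {p : ℕ} (hp : p.Prime) (hy : 0 < y)
    (hq : 1 < q) (h : y ^ (q : ℝ) = p) : Irrational y := by
  have : Fact p.Prime := ⟨hp⟩
  have hnum : (q.num : ℚ) = q * q.den := (Rat.mul_den_eq_num q).symm
  have hden_lt : (q.den : ℤ) < q.num := by
    have : (q.den : ℚ) < q.num := by
      rw [hnum]; exact lt_mul_of_one_lt_left (by exact_mod_cast q.pos) hq
    exact_mod_cast this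
  set n := q.num.natAbs
  have hn : (n : ℤ) = q.num := Int.natAbs_of_nonneg (by omega)
  refine irrational_nrt_of_n_not_dvd_multiplicity n (m := (p : ℤ) ^ q.den)
    (pow_ne_zero _ (by exact_mod_cast hp.ne_zero)) p ?_ ?_
  · have hn' : (n : ℝ) = q * q.den := by
      exact_mod_cast (congrArg (Int.cast : ℤ → ℚ) hn).trans hnum
    rw [← rpow_natCast, hn', rpow_mul hy.le, h]
    push_cast
    exact rpow_natCast _ _
  · rw [multiplicity_pow_self_of_prime (Nat.prime_iff_prime_int.1 hp),
      Nat.mod_eq_of_lt (by omega)]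
    exact q.den_ne_zero

theorem SchanuelConjecture.not_isAlgebraic_and_isAlgebraic_of_rpow_eq (hS : SchanuelConjecture)
    {x y : ℝ} {p k : ℕ} (hp : p.Prime) (hx : 1 < x) (hy : 0 < y) (hxy : x ^ y = p ^ k)
    (hyx : y ^ x = p) : ¬(IsAlgebraic ℚ x ∧ IsAlgebraic ℚ y) := by
  rintro ⟨hx_alg, hy_alg⟩
  by_cases hy_irr : Irrational y
  · refine hS.transcendental_rpow (by positivity) hx.ne' hx_alg hy_alg hy_irr ?_
    rw [hxy]; exact_mod_cast isAlgebraic_natCast (p ^ k)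
  obtain ⟨q, rfl⟩ := not_not.1 hy_irr
  have hy₁ : (q : ℝ) ≠ 1 := by
    rintro hq; rw [hq, one_rpow] at hyx; exact hp.one_lt.ne (by exact_mod_cast hyx)
  by_cases hx_irr : Irrational x
  · refine hS.transcendental_rpow hy hy₁ hy_alg hx_alg hx_irr ?_
    rw [hyx]; exact isAlgebraic_natCast p
  obtain ⟨r, rfl⟩ := not_not.1 hx_irr
  exact irrational_of_rpow_ratCast_eq_prime hp hy (by exact_mod_cast hx) hyx ⟨q, rfl⟩

theorem SchanuelConjecture.transcendental_of_rpow_eq (hS : SchanuelConjecture) {x y : ℝ}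
    {p k : ℕ} (hp : p.Prime) (hx : 1 < x) (hy : 0 < y) (hxy : x ^ y = p ^ k) (hyx : y ^ x = p) :
    Transcendental ℚ x ∧ Transcendental ℚ y := by
  have hx₀ : 0 < x := by positivity
  have hL : log p ≠ 0 := (log_pos (by exact_mod_cast hp.one_lt)).ne'
  have hL_alg : IsAlgebraic ℚ (exp (log p)) := by
    rw [exp_log (by exact_mod_cast hp.pos)]; exact isAlgebraic_natCast p
  have hxy' : y * log x = (k : ℚ) * log p := by
    rw [← log_rpow hx₀, hxy, log_pow]; push_cast; rfl
  have hyx' : x * log y = (1 : ℚ) * log p := by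
    rw [← log_rpow hy, hyx]; push_cast; ring
  have hk : (k : ℚ) ≠ 0 := by
    rintro hk
    rw [hk, Rat.cast_zero, zero_mul] at hxy'
    exact (mul_pos hy (log_pos hx)).ne' hxy'
  have hnot := hS.not_isAlgebraic_and_isAlgebraic_of_rpow_eq hp hx hy hxy hyx
  exact ⟨fun hx_alg ↦ hnot ⟨hx_alg,
      hS.isAlgebraic_of_mul_log_eq hx₀ hy hL hL_alg hk one_ne_zero hxy' hyx' hx_alg⟩,
    fun hy_alg ↦ hnot ⟨hS.isAlgebraic_of_mul_log_eq hy hx₀ hL hL_alg one_ne_zero hk hyx' hxy'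
      hy_alg, hy_alg⟩⟩

theorem exists_rpow_eq_exp_and_rpow_eq_exp {A B a b : ℝ} (hA : 0 < A) (ha : 1 < a) (hab : a ≤ b)
    (hb : b * log (A / log b) ≤ B) (ha' : B ≤ a * log (A / log a)) :
    ∃ x ∈ Icc a b, x ^ (A / log x) = exp A ∧ (A / log x) ^ x = exp B := by
  have hlog_pos : ∀ x ∈ Icc a b, 0 < log x := fun x hx ↦ log_pos (ha.trans_le hx.1)
  have hcont : ContinuousOn (fun x ↦ x * log (A / log x)) (Icc a b) :=
    continuousOn_id.mul <| (continuousOn_const.div (continuousOn_log.mono fun x hx ↦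
      (zero_lt_one.trans (ha.trans_le hx.1)).ne') fun x hx ↦ (hlog_pos x hx).ne').log
      fun x hx ↦ (div_pos hA (hlog_pos x hx)).ne'
  obtain ⟨x, hx, hφ⟩ := intermediate_value_Icc' hab hcont ⟨hb, ha'⟩
  have hx₀ : 0 < x := zero_lt_one.trans (ha.trans_le hx.1)
  refine ⟨x, hx, ?_, ?_⟩
  · rw [rpow_def_of_pos hx₀, mul_div_cancel₀ _ (hlog_pos x hx).ne']
  · rw [rpow_def_of_pos (div_pos hA (hlog_pos x hx)), mul_comm]
    exact congrArg exp hφ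

theorem exists_rpow_eq_289_and_rpow_eq_17 :
    ∃ x y : ℝ, 1 < x ∧ 0 < y ∧ x ^ y = 289 ∧ y ^ x = 17 := by
  have hlog289 : log 289 = 2 * log 17 := by
    rw [show (289 : ℝ) = 17 ^ 2 by norm_num, log_pow]; push_cast; rfl
  have hlog17 : 0 < log 17 := log_pos (by norm_num)
  obtain ⟨x, hx, hxy, hyx⟩ := exists_rpow_eq_exp_and_rpow_eq_exp (A := log 289) (B := log 17)
    (a := 17) (b := 289) (by positivity) (by norm_num) (by norm_num)
    (by rw [div_self (by positivity), log_one, mul_zero]; exact hlog17.le)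
    (by
      rw [hlog289, mul_div_cancel_right₀ _ hlog17.ne', ← log_rpow two_pos]
      exact log_le_log (by norm_num) (by norm_num))
  have hx₁ : 1 < x := by linarith [hx.1]
  refine ⟨x, log 289 / log x, hx₁, div_pos (by positivity) (log_pos hx₁), ?_, ?_⟩
  · rw [hxy, exp_log (by norm_num)]
  · rw [hyx, exp_log (by norm_num)]

theorem exists_ne_rpow_eq_17_and_rpow_eq_17 :
    ∃ s t : ℝ, 1 < s ∧ 0 < t ∧ s ≠ t ∧ s ^ t = 17 ∧ t ^ s = 17 := by
  have hlog17 : 0 < log 17 := log_pos (by norm_num)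
  have hlog4 : 0 < log 4 := log_pos (by norm_num)
  have hlog_ratio : 51 / 25 ≤ log 17 / log 4 := by
    have h : log (4 ^ 51) ≤ log (17 ^ 25) := log_le_log (by norm_num) (by norm_num)
    rw [log_pow, log_pow] at h
    rw [le_div_iff₀ hlog4]
    push_cast at h
    linarith
  -- `[4, 17]` lies above the solution `s = t ≈ 2.78` of `s ^ s = 17`, so it yields `t < 3 < s`.
  obtain ⟨s, hs, hst, hts⟩ := exists_rpow_eq_exp_and_rpow_eq_exp (A := log 17) (B := log 17)
    (a := 4) (b := 17) hlog17 (by norm_num) (by norm_num)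
    (by rw [div_self hlog17.ne', log_one, mul_zero]; exact hlog17.le)
    (calc log 17 ≤ log ((51 / 25) ^ 4) := log_le_log (by norm_num) (by norm_num)
      _ = 4 * log (51 / 25) := by rw [log_pow]; push_cast; rfl
      _ ≤ 4 * log (log 17 / log 4) := by gcongr)
  have hs₁ : 1 < s := by linarith [hs.1]
  have ht₃ : log 17 / log s < 3 := by
    rw [div_lt_iff₀ (log_pos hs₁)]
    calc log 17 < log (4 ^ 3) := log_lt_log (by norm_num) (by norm_num)
      _ = 3 * log 4 := by rw [log_pow]; push_cast; rfl
      _ ≤ 3 * log s := by gcongr; exact hs.1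
  refine ⟨s, log 17 / log s, hs₁, div_pos hlog17 (log_pos hs₁), ?_, ?_, ?_⟩
  · exact (ht₃.trans (by linarith [hs.1] : (3 : ℝ) < s)).ne'
  · rw [hst, exp_log (by norm_num)]
  · rw [hts, exp_log (by norm_num)]

/-- Assuming Schanuel's conjecture, there exist transcendental positive reals
`x, y` and `s ≠ t` with `x^y ≠ y^x` and `s^t = t^s` all integers. -/
theorem exists_transcendental_with_integer_powers (hS : SchanuelConjecture) :
    ∃ x y s t : ℝ, 0 < x ∧ 0 < y ∧ 0 < s ∧ 0 < t ∧ s ≠ t ∧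
      Transcendental ℚ x ∧ Transcendental ℚ y ∧
      Transcendental ℚ s ∧ Transcendental ℚ t ∧
      (∃ a : ℤ, (a : ℝ) = x ^ y) ∧ (∃ b : ℤ, (b : ℝ) = y ^ x) ∧
      (∃ c : ℤ, (c : ℝ) = s ^ t) ∧ (∃ d : ℤ, (d : ℝ) = t ^ s) ∧
      x ^ y ≠ y ^ x ∧ s ^ t = t ^ s := by
  obtain ⟨x, y, hx, hy, hxy, hyx⟩ := exists_rpow_eq_289_and_rpow_eq_17
  obtain ⟨s, t, hs, ht, hst, hst', hts'⟩ := exists_ne_rpow_eq_17_and_rpow_eq_17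
  have hxy_tr := hS.transcendental_of_rpow_eq (p := 17) (k := 2) (by norm_num) hx hy
    (by rw [hxy]; norm_num) (by rw [hyx]; norm_num)
  have hst_tr := hS.transcendental_of_rpow_eq (p := 17) (k := 1) (by norm_num) hs ht
    (by rw [hst']; norm_num) (by rw [hts']; norm_num)
  refine ⟨x, y, s, t, by positivity, hy, by positivity, ht, hst, hxy_tr.1, hxy_tr.2, hst_tr.1,
    hst_tr.2, ⟨289, by rw [hxy]; norm_num⟩, ⟨17, by rw [hyx]; norm_num⟩,
    ⟨17, by rw [hst']; norm_num⟩, ⟨17, by rw [hts']; norm_num⟩, by rw [hxy, hyx]; norm_num,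
    by rw [hst', hts']⟩
end

section
/- Assume Schanuel's conjecture. Let α, β, γ be nonzero complex numbers with α ≠ 1 and β^γ ≠ 1, such that at least one of α, β^γ is irrational, at least one is algebraic, and β^{γα} = (β^γ)^α is algebraic. Then α^{β^γ} is transcendental. -/
/-!
Write `α = e^v`, `B = β^γ = e^m` and suppose that `α^B = e^{Bv}` is algebraic, as is `B^α = e^{αm}`.
Schanuel's conjecture implies that a `ℚ`-linearly independent family `x₁, …, xₙ` such that all
`xᵢ` and `e^{xᵢ}` are algebraic over `ℚ(s)` has `n ≤ |s|`.

If `α` and `B` are both algebraic, one of them, `c`, is irrational, and the independent pair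
`(x, c x)` with `x ∈ {m, v}` contradicts this with `s = {x}` (conditional Gelfond–Schneider).
Otherwise exactly one of `a = e^x`, `b = e^y` is algebraic, say `a`, where `(x, y)` is `(v, m)` or
`(m, v)`: the hypotheses are symmetric under this swap. Then `a` is irrational (a nonzero rational
power of `b` is transcendental), so `y, a y` are independent. If `x` is algebraic over `ℚ(y, b)`,
then `x`, or `b x` when `x ∈ ℚ̄ y`, extends `y, a y` to an independent triple over `ℚ(y, b)`;
otherwise `b x, x, y, a y` are independent over `ℚ(x, y, b)`.
-/

open Set Complex

section LinearAlgebra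

variable {K : Type*} [Field K] [CharZero K]

theorem linearIndependent_pair_mul_s13 {y c : K} (hy : y ≠ 0) (hc : ∀ q : ℚ, c ≠ q) :
    LinearIndependent ℚ ![y, c * y] := by
  rw [LinearIndependent.pair_iff' hy]
  intro q hq
  rw [Rat.smul_def] at hq
  exact hc q (mul_right_cancel₀ hy hq).symm

theorem exists_isAlgebraic_mul_eq_of_mem_span_pair {y c z : K} (hc : IsAlgebraic ℚ c)
    (hz : z ∈ Submodule.span ℚ (range ![y, c * y])) : ∃ d : K, IsAlgebraic ℚ d ∧ d * y = z := by
  rw [Matrix.range_cons_cons_empty, Submodule.mem_span_pair] at hz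
  obtain ⟨p, q, rfl⟩ := hz
  refine ⟨p + q * c, (isAlgebraic_algebraMap p).add ((isAlgebraic_algebraMap q).mul hc), ?_⟩
  simp only [Rat.smul_def]
  ring

theorem isAlgebraic_of_mem_span_pair {y c z b : K} (hc : IsAlgebraic ℚ c) (hz0 : z ≠ 0)
    (hz : z ∈ Submodule.span ℚ (range ![y, c * y]))
    (hbz : b * z ∈ Submodule.span ℚ (range ![y, c * y])) : IsAlgebraic ℚ b := by
  obtain ⟨d, hd, rfl⟩ := exists_isAlgebraic_mul_eq_of_mem_span_pair hc hz
  obtain ⟨e, he, hey⟩ := exists_isAlgebraic_mul_eq_of_mem_span_pair hc hbz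
  obtain ⟨hd0, hy0⟩ := mul_ne_zero_iff.mp hz0
  have hb : b = e * d⁻¹ := by
    field_simp
    exact mul_right_cancel₀ hy0 (by rw [hey]; ring)
  exact hb ▸ he.mul hd.inv

end LinearAlgebra

section AdjoinAlgebraic

variable {R A : Type*} [Field R] [CommRing A] [Nontrivial A] [Algebra R A] {s : Set A} {z : A}

theorem isAlgebraic_adjoin_of_mem_s13 (h : z ∈ s) : IsAlgebraic (Algebra.adjoin R s) z :=
  isAlgebraic_algebraMap (⟨z, Algebra.subset_adjoin h⟩ : Algebra.adjoin R s)

theorem IsAlgebraic.tower_top_adjoin_s13 (h : IsAlgebraic R z) :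
    IsAlgebraic (Algebra.adjoin R s) z :=
  h.extendScalars (algebraMap R _).injective

end AdjoinAlgebraic

theorem mul_notMem_span_of_transcendental {K : Type*} [Field K] [CharZero K] {x y a b : K}
    (ha : IsAlgebraic ℚ a) (hb : Transcendental ℚ b)
    (hx : ¬IsAlgebraic (Algebra.adjoin ℚ {y, b}) x) :
    b * x ∉ Submodule.span ℚ (range ![x, y, a * y]) := by
  intro hbx
  rw [Matrix.range_cons, singleton_union, Submodule.mem_span_insert] at hbx
  obtain ⟨p, w, hw, hbxw⟩ := hbx
  obtain ⟨d, hd, hdy⟩ := exists_isAlgebraic_mul_eq_of_mem_span_pair ha hw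
  have hbp : b - p ≠ 0 := fun h => hb (sub_eq_zero.mp h ▸ isAlgebraic_algebraMap p)
  have hxdy : x = d * y * (b - p)⁻¹ := by
    field_simp
    rw [Rat.smul_def] at hbxw
    linear_combination hbxw - hdy
  refine hx (hxdy ▸ (hd.tower_top_adjoin_s13.mul (isAlgebraic_adjoin_of_mem_s13 (by simp))).mul ?_)
  exact IsAlgebraic.inv_iff.mpr ((isAlgebraic_adjoin_of_mem_s13 (by simp)).sub
    (isAlgebraic_algebraMap p).tower_top_adjoin_s13)

theorem isAlgebraic_exp_of_isAlgebraic_exp_ratCast_mul {q : ℚ} (hq : q ≠ 0) {z : ℂ}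
    (h : IsAlgebraic ℚ (exp (q * z))) : IsAlgebraic ℚ (exp z) := by
  have key : exp z ^ q.num = exp (q * z) ^ q.den := by
    rw [← exp_int_mul, ← exp_nat_mul, ← mul_assoc]
    congr 2
    rw [mul_comm]
    exact_mod_cast (Rat.mul_den_eq_num q).symm
  have hpow : IsAlgebraic ℚ (exp z ^ q.num) := key ▸ h.pow _
  rcases Int.natAbs_eq q.num with hn | hn <;> rw [hn] at hpow
  · rw [zpow_natCast] at hpow
    exact hpow.of_pow (by simpa using hq)
  · rw [zpow_neg, zpow_natCast, IsAlgebraic.inv_iff] at hpow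
    exact hpow.of_pow (by simpa using hq)

theorem AlgebraicIndependent.encard_range_le {R A ι : Type*} [CommRing R] [CommRing A]
    [IsDomain A] [Algebra R A] [FaithfulSMul R A] {g : ι → A} (hg : AlgebraicIndependent R g)
    {s : Set A} (h : ∀ i, IsAlgebraic (Algebra.adjoin R s) (g i)) :
    (range g).encard ≤ s.encard := by
  let M := AlgebraicIndependent.matroid R A
  have hsub : range g ⊆ M.closure s := by
    rw [AlgebraicIndependent.matroid_closure_eq]
    rintro _ ⟨i, rfl⟩
    exact h i
  calc (range g).encard ≤ M.eRk (M.closure s) :=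
        Matroid.Indep.encard_le_eRk_of_subset hg.to_subtype_range hsub
    _ = M.eRk s := M.eRk_closure_eq s
    _ ≤ s.encard := M.eRk_le_encard s

namespace SchanuelConjecture

theorem le_encard (hS : SchanuelConjecture) {n : ℕ} {x : Fin n → ℂ}
    (hx : LinearIndependent ℚ x) {s : Set ℂ}
    (hxs : ∀ i, IsAlgebraic (Algebra.adjoin ℚ s) (x i))
    (hexp : ∀ i, IsAlgebraic (Algebra.adjoin ℚ s) (exp (x i))) :
    (n : ℕ∞) ≤ s.encard := by
  obtain ⟨g, hgx, hg⟩ := hS n x hx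
  have := hg.encard_range_le (s := s) fun i => by
    rcases hgx i with ⟨j, hj⟩ | ⟨j, hj⟩
    · exact hj ▸ hxs j
    · exact hj ▸ hexp j
  simpa using hg.injective.encard_range.trans this

theorem transcendental_exp_mul (hS : SchanuelConjecture) {x c : ℂ}
    (hx : x ≠ 0) (hc : IsAlgebraic ℚ c) (hc_irr : ∀ q : ℚ, c ≠ q)
    (hex : IsAlgebraic ℚ (exp x)) : Transcendental ℚ (exp (c * x)) := by
  intro hecx
  have := hS.le_encard (linearIndependent_pair_mul_s13 hx hc_irr) (s := {x})
    (by simpa [Fin.forall_fin_two] using ⟨isAlgebraic_adjoin_of_mem_s13 rfl,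
      hc.tower_top_adjoin_s13.mul (isAlgebraic_adjoin_of_mem_s13 rfl)⟩)
    (by simpa [Fin.forall_fin_two] using ⟨hex.tower_top_adjoin_s13, hecx.tower_top_adjoin_s13⟩)
  simp at this

theorem not_linearIndependent_three (hS : SchanuelConjecture) {z y a : ℂ}
    (hz : IsAlgebraic (Algebra.adjoin ℚ {y, exp y}) z) (hez : IsAlgebraic ℚ (exp z))
    (ha : IsAlgebraic ℚ a) (hay : IsAlgebraic ℚ (exp (a * y))) :
    ¬LinearIndependent ℚ ![z, y, a * y] := by
  intro hli
  have := hS.le_encard hli (s := {y, exp y})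
    (by simpa [Fin.forall_fin_succ] using ⟨hz, isAlgebraic_adjoin_of_mem_s13 (by simp),
      ha.tower_top_adjoin_s13.mul (isAlgebraic_adjoin_of_mem_s13 (by simp))⟩)
    (by simpa [Fin.forall_fin_succ] using ⟨hez.tower_top_adjoin_s13,
      isAlgebraic_adjoin_of_mem_s13 (by simp), hay.tower_top_adjoin_s13⟩)
  have := this.trans (encard_insert_le _ _)
  norm_num at this

theorem not_linearIndependent_four (hS : SchanuelConjecture) {x y : ℂ}
    (ha : IsAlgebraic ℚ (exp x)) (hay : IsAlgebraic ℚ (exp (exp x * y)))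
    (hbx : IsAlgebraic ℚ (exp (exp y * x))) :
    ¬LinearIndependent ℚ ![exp y * x, x, y, exp x * y] := by
  intro hli
  have := hS.le_encard hli (s := {x, y, exp y})
    (by simpa [Fin.forall_fin_succ] using ⟨(isAlgebraic_adjoin_of_mem_s13 (by simp)).mul
      (isAlgebraic_adjoin_of_mem_s13 (by simp)), isAlgebraic_adjoin_of_mem_s13 (by simp),
      isAlgebraic_adjoin_of_mem_s13 (by simp),
      ha.tower_top_adjoin_s13.mul (isAlgebraic_adjoin_of_mem_s13 (by simp))⟩)
    (by simpa [Fin.forall_fin_succ] using ⟨hbx.tower_top_adjoin_s13, ha.tower_top_adjoin_s13,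
      isAlgebraic_adjoin_of_mem_s13 (by simp), hay.tower_top_adjoin_s13⟩)
  have := this.trans ((encard_insert_le _ _).trans (add_le_add_left (encard_insert_le _ _) 1))
  norm_num at this

theorem transcendental_exp_exp_mul (hS : SchanuelConjecture) {x y : ℂ}
    (ha : IsAlgebraic ℚ (exp x)) (hb : Transcendental ℚ (exp y))
    (hay : IsAlgebraic ℚ (exp (exp x * y))) : Transcendental ℚ (exp (exp y * x)) := by
  intro hbx
  have hy : y ≠ 0 := by rintro rfl; exact hb (by simpa using isAlgebraic_one)
  have ha_irr : ∀ q : ℚ, exp x ≠ q := by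
    intro q hq
    have hq0 : q ≠ 0 := by rintro rfl; simp at hq
    exact hb (isAlgebraic_exp_of_isAlgebraic_exp_ratCast_mul hq0 (hq ▸ hay))
  have hx : x ≠ 0 := by rintro rfl; exact ha_irr 1 (by simp)
  have hyay : LinearIndependent ℚ ![y, exp x * y] := linearIndependent_pair_mul_s13 hy ha_irr
  by_cases hxalg : IsAlgebraic (Algebra.adjoin ℚ {y, exp y}) x
  · by_cases hxspan : x ∈ Submodule.span ℚ (range ![y, exp x * y])
    · obtain ⟨c, hc, hcy⟩ := exists_isAlgebraic_mul_eq_of_mem_span_pair ha hxspan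
      refine hS.not_linearIndependent_three ?_ hbx ha hay
        (hyay.finCons fun hbxspan => hb (isAlgebraic_of_mem_span_pair ha hx hxspan hbxspan))
      rw [← hcy]
      exact (isAlgebraic_adjoin_of_mem_s13 (by simp)).mul
        (hc.tower_top_adjoin_s13.mul (isAlgebraic_adjoin_of_mem_s13 (by simp)))
    · exact hS.not_linearIndependent_three hxalg ha ha hay (hyay.finCons hxspan)
  · have hxspan : x ∉ Submodule.span ℚ (range ![y, exp x * y]) := fun hxspan => hxalg <| by
      obtain ⟨c, hc, hcy⟩ := exists_isAlgebraic_mul_eq_of_mem_span_pair ha hxspan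
      exact hcy ▸ hc.tower_top_adjoin_s13.mul (isAlgebraic_adjoin_of_mem_s13 (by simp))
    exact hS.not_linearIndependent_four ha hay hbx
      ((hyay.finCons hxspan).finCons (mul_notMem_span_of_transcendental ha hb hxalg))

end SchanuelConjecture

theorem alpha_pow_beta_gamma_transcendental_general (hS : SchanuelConjecture)
    (α γ l m v : ℂ)
    (hα1 : α ≠ 1)
    (hm : Complex.exp m = Complex.exp (γ * l))
    (hv : Complex.exp v = α)
    (hbg1 : Complex.exp (γ * l) ≠ 1)
    (hirr : (¬∃ q : ℚ, α = (q : ℂ)) ∨ (¬∃ q : ℚ, Complex.exp (γ * l) = (q : ℂ)))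
    (halg : IsAlgebraic ℚ α ∨ IsAlgebraic ℚ (Complex.exp (γ * l)))
    (hpow : IsAlgebraic ℚ (Complex.exp (α * m))) :
    Transcendental ℚ (Complex.exp (Complex.exp (γ * l) * v)) := by
  intro hBv
  subst hv
  rw [← hm] at hbg1 hirr halg hBv
  have hv0 : v ≠ 0 := by rintro rfl; exact hα1 exp_zero
  have hm0 : m ≠ 0 := by rintro rfl; exact hbg1 exp_zero
  by_cases hαalg : IsAlgebraic ℚ (exp v) <;> by_cases hBalg : IsAlgebraic ℚ (exp m)
  · rcases hirr with hαirr | hBirr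
    · exact hS.transcendental_exp_mul hm0 hαalg (not_exists.mp hαirr) hBalg hpow
    · exact hS.transcendental_exp_mul hv0 hBalg (not_exists.mp hBirr) hαalg hBv
  · exact hS.transcendental_exp_exp_mul hαalg hBalg hpow hBv
  · exact hS.transcendental_exp_exp_mul hBalg hαalg hBv hpow
  · exact halg.elim hαalg hBalg

/-- Assuming Schanuel's conjecture: with powers via fixed logarithms
(`exp l = β`, `β^γ = exp (γ·l)`, `exp m = β^γ`, `(β^γ)^α = exp (α·m)`,
`exp v = α`, `α^{β^γ} = exp (β^γ·v)`), if `α, β, γ ≠ 0`, `α ≠ 1`, `β^γ ≠ 1`,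
at least one of `α, β^γ` is irrational, at least one is algebraic, and
`(β^γ)^α` is algebraic, then `α^{β^γ}` is transcendental. -/
theorem alpha_pow_beta_gamma_transcendental (hS : SchanuelConjecture)
    (α β γ l m v : ℂ)
    (hα : α ≠ 0) (hβ : β ≠ 0) (hγ : γ ≠ 0) (hα1 : α ≠ 1)
    (hl : Complex.exp l = β)
    (hm : Complex.exp m = Complex.exp (γ * l))
    (hv : Complex.exp v = α)
    (hbg1 : Complex.exp (γ * l) ≠ 1)
    (hirr : (¬∃ q : ℚ, α = (q : ℂ)) ∨ (¬∃ q : ℚ, Complex.exp (γ * l) = (q : ℂ)))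
    (halg : IsAlgebraic ℚ α ∨ IsAlgebraic ℚ (Complex.exp (γ * l)))
    (hpow : IsAlgebraic ℚ (Complex.exp (α * m))) :
    Transcendental ℚ (Complex.exp (Complex.exp (γ * l) * v)) :=
  alpha_pow_beta_gamma_transcendental_general hS α γ l m v hα1 hm hv hbg1 hirr halg hpow
end

section
/- Assume Schanuel's conjecture. Let α be a nonzero algebraic complex number and z an irrational complex number with α^{α^z} = z (powers via a fixed logarithm λ of α: α^z = exp(zλ), α^{α^z} = exp(exp(zλ)·λ)). Then z is transcendental. -/
open Set Subalgebra

theorem AlgebraicIndependent.card_le_encard_of_forall_mem_algebraicClosure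
    {R A ι : Type*} [CommRing R] [CommRing A] [IsDomain A] [Algebra R A] [FaithfulSMul R A]
    [Fintype ι] {x : ι → A} (hx : AlgebraicIndependent R x) {s : Set A}
    (hxs : ∀ i, x i ∈ algebraicClosure (Algebra.adjoin R s) A) :
    (Fintype.card ι : ℕ∞) ≤ s.encard := by
  have := (algebraMap R A).domain_nontrivial
  have hind : (AlgebraicIndependent.matroid R A).Indep (range x) := hx.to_subtype_range
  have hcl : range x ⊆ (AlgebraicIndependent.matroid R A).closure s := by
    rw [AlgebraicIndependent.matroid_closure_eq]
    exact range_subset_iff.mpr hxs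
  calc (Fintype.card ι : ℕ∞) ≤ (range x).encard :=
        ENat.card_eq_coe_fintype_card (α := ι) ▸ hx.injective.encard_range
    _ ≤ (AlgebraicIndependent.matroid R A).eRk (AlgebraicIndependent.matroid R A |>.closure s) :=
        hind.encard_le_eRk_of_subset hcl
    _ = (AlgebraicIndependent.matroid R A).eRk s := Matroid.eRk_closure_eq _ _
    _ ≤ s.encard := Matroid.eRk_le_encard _ _

theorem LinearIndependent.mul_right {R A ι : Type*} [CommRing R] [Ring A] [NoZeroDivisors A]
    [Algebra R A] {v : ι → A} (hv : LinearIndependent R v) {c : A} (hc : c ≠ 0) :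
    LinearIndependent R (fun i ↦ v i * c) := by
  have hinj : Function.Injective (LinearMap.mulRight R c) := mul_left_injective₀ hc
  exact hv.map' _ (LinearMap.ker_eq_bot_of_injective hinj)

theorem Transcendental.notMem_span {R A : Type*} [CommRing R] [IsDomain R] [CommRing A]
    [Algebra R A] {s : Set A} (hs : ∀ a ∈ s, IsAlgebraic R a) {x : A}
    (hx : Transcendental R x) :
    x ∉ Submodule.span R s := fun hmem ↦
  hx <| (Submodule.span_le (p := (algebraicClosure R A).toSubmodule)).mpr hs hmem

theorem Subalgebra.mem_algebraicClosure_adjoin_of_mem {R A : Type*} [CommRing R] [CommRing A]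
    [IsDomain A] [Algebra R A] {s : Set A} {x : A} (hx : x ∈ s) :
    x ∈ algebraicClosure (Algebra.adjoin R s) A :=
  isAlgebraic_algebraMap (⟨x, Algebra.subset_adjoin hx⟩ : Algebra.adjoin R s)

theorem Subalgebra.mem_algebraicClosure_adjoin_of_isAlgebraic {K A : Type*} [Field K] [CommRing A]
    [IsDomain A] [Algebra K A] {s : Set A} {x : A} (hx : IsAlgebraic K x) :
    x ∈ algebraicClosure (Algebra.adjoin K s) A :=
  hx.extendScalars (algebraMap K _).injective

theorem SchanuelConjecture.card_le_encard (hS : SchanuelConjecture) {n : ℕ} {v : Fin n → ℂ}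
    (hv : LinearIndependent ℚ v) {s : Set ℂ}
    (hvs : ∀ i, v i ∈ algebraicClosure (Algebra.adjoin ℚ s) ℂ ∧
      Complex.exp (v i) ∈ algebraicClosure (Algebra.adjoin ℚ s) ℂ) :
    (n : ℕ∞) ≤ s.encard := by
  obtain ⟨g, hgv, hg⟩ := hS n v hv
  simpa using hg.card_le_encard_of_forall_mem_algebraicClosure fun i ↦ by
    rcases hgv i with ⟨j, hj⟩ | ⟨j, hj⟩ <;> rw [← hj]
    exacts [(hvs j).1, (hvs j).2]

theorem transcendental_of_alpha_pow_alpha_pow_general (hS : SchanuelConjecture)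
    (α z lam : ℂ) (hα : IsAlgebraic ℚ α)
    (hl : Complex.exp lam = α) (hl0 : lam ≠ 0)
    (hz : ¬∃ q : ℚ, z = (q : ℂ))
    (heq : Complex.exp (Complex.exp (z * lam) * lam) = z) :
    Transcendental ℚ z := by
  intro hz_alg
  set w := Complex.exp (z * lam)
  have h1z : LinearIndependent ℚ ![1, z] :=
    (LinearIndependent.pair_iff' one_ne_zero).mpr fun q hq ↦ hz ⟨q, by simp [← hq]⟩
  have hw : Transcendental ℚ w := by
    intro hw_alg
    have hcard := hS.card_le_encard (h1z.mul_right hl0) (s := {lam}) fun i ↦ by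
      have hlam_mem := mem_algebraicClosure_adjoin_of_mem (R := ℚ) (mem_singleton lam)
      fin_cases i
      · simpa [hl] using ⟨hlam_mem, mem_algebraicClosure_adjoin_of_isAlgebraic hα⟩
      · simpa using ⟨mul_mem (mem_algebraicClosure_adjoin_of_isAlgebraic hz_alg) hlam_mem,
          mem_algebraicClosure_adjoin_of_isAlgebraic hw_alg⟩
    simp at hcard
  have hwz1 : LinearIndependent ℚ ![w, 1, z] :=
    linearIndependent_finCons.mpr ⟨h1z, hw.notMem_span (by simp [isAlgebraic_one, hz_alg])⟩
  have hcard := hS.card_le_encard (hwz1.mul_right hl0) (s := {lam, w}) fun i ↦ by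
    have hlam_mem := mem_algebraicClosure_adjoin_of_mem (R := ℚ) (mem_insert lam {w})
    have hw_mem := mem_algebraicClosure_adjoin_of_mem (R := ℚ)
      (mem_insert_of_mem lam (mem_singleton w))
    have hz_mem := mem_algebraicClosure_adjoin_of_isAlgebraic (s := {lam, w}) hz_alg
    fin_cases i
    · simpa [heq] using ⟨mul_mem hw_mem hlam_mem, hz_mem⟩
    · simpa [hl] using ⟨hlam_mem, mem_algebraicClosure_adjoin_of_isAlgebraic hα⟩
    · simpa using ⟨mul_mem hz_mem hlam_mem, hw_mem⟩
  exact absurd (hcard.trans (encard_insert_le _ _)) (by norm_num)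

/-- Assuming Schanuel's conjecture (and Gelfond–Schneider), if `α ≠ 0` is
algebraic, `z` is irrational, and `α^{α^z} = z` (powers via a fixed nonzero
logarithm `λ` of `α`), then `z` is transcendental. -/
theorem transcendental_of_alpha_pow_alpha_pow (hS : SchanuelConjecture)
    (hGS : ∀ (α β lam : ℂ), IsAlgebraic ℚ α → IsAlgebraic ℚ β → α ≠ 0 → α ≠ 1 →
      (¬∃ q : ℚ, β = (q : ℂ)) → Complex.exp lam = α → lam ≠ 0 →
      Transcendental ℚ (Complex.exp (β * lam)))
    (α z lam : ℂ) (hα : IsAlgebraic ℚ α) (hα0 : α ≠ 0)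
    (hl : Complex.exp lam = α) (hl0 : lam ≠ 0)
    (hz : ¬∃ q : ℚ, z = (q : ℂ))
    (heq : Complex.exp (Complex.exp (z * lam) * lam) = z) :
    Transcendental ℚ z :=
  transcendental_of_alpha_pow_alpha_pow_general hS α z lam hα hl hl0 hz heq
end
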